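/- arXiv:1907.04993 — 2 statements merged into one kernel-verified Lean document; each statement's English description precedes it below -/
import Mathlib

section
/- The number of r-uniform hypertrees on the labelled vertex set [n], where r-1 divides n-1 and t = (n-1)/(r-1), equals (n-1)! · n^{t-1} / (t! · ((r-1)!)^t). -/
open Finset

/-- A Berge path of positive length exists between any two distinct vertices. -/
def BergeConnected {V : Type*} [DecidableEq V] (E : Finset (Finset V)) : Prop :=
  ∀ u v : V, u ≠ v → ∃ (ℓ : ℕ) (vs : Fin (ℓ + 1) → V) (es : Fin ℓ → Finset V),
    Function.Injective vs ∧ Function.Injective es ∧ (∀ i, es i ∈ E) ∧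
    vs 0 = u ∧ vs (Fin.last ℓ) = v ∧
    ∀ i : Fin ℓ, vs i.castSucc ∈ es i ∧ vs i.succ ∈ es i

/-- A 2-cycle: two distinct edges sharing at least two vertices. -/
def HasTwoCycle {V : Type*} [DecidableEq V] (E : Finset (Finset V)) : Prop :=
  ∃ e ∈ E, ∃ f ∈ E, e ≠ f ∧ 2 ≤ (e ∩ f).card

/-- A cycle of length ℓ ≥ 3: distinct edges e₁,…,e_ℓ and distinct vertices
v₁,…,v_ℓ with vᵢ ∈ eᵢ ∩ eᵢ₊₁ (cyclically). -/
def HasLongCycle {V : Type*} [DecidableEq V] (E : Finset (Finset V)) : Prop :=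
  ∃ (ℓ : ℕ) (es : Fin (ℓ + 3) → Finset V) (vs : Fin (ℓ + 3) → V),
    Function.Injective es ∧ Function.Injective vs ∧ (∀ i, es i ∈ E) ∧
    ∀ i, vs i ∈ es i ∧ vs i ∈ es (i + 1)

/-- A hypertree is a connected hypergraph with no cycles (edges are sets, so
there are no loops/1-cycles). -/
def IsHypertree {V : Type*} [DecidableEq V] (E : Finset (Finset V)) : Prop :=
  BergeConnected E ∧ ¬ HasTwoCycle E ∧ ¬ HasLongCycle E

/-- `r`-uniform: every edge has exactly `r` vertices. -/
def UniformR {V : Type*} (r : ℕ) (E : Finset (Finset V)) : Prop :=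
  ∀ e ∈ E, e.card = r

/-- Degree of a vertex: number of edges containing it. -/
def hdegree {V : Type*} [DecidableEq V] (E : Finset (Finset V)) (v : V) : ℕ :=
  (E.filter (fun e => v ∈ e)).card

set_option linter.unusedSectionVars false
set_option maxHeartbeats 1000000

section HypertreeCount

variable {V : Type*} [DecidableEq V]


/-- Two vertices are adjacent if they share an edge. -/
def adjE (E : Finset (Finset V)) (a b : V) : Prop := ∃ e ∈ E, a ∈ e ∧ b ∈ e

/-- Reachability: refl-trans closure of adjacency. -/
def Reach (E : Finset (Finset V)) : V → V → Prop := Relation.ReflTransGen (adjE E)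

/-- Acyclicity: each edge is a bridge between any two of its vertices. -/
def Acyc (E : Finset (Finset V)) : Prop :=
  ∀ e ∈ E, ∀ u ∈ e, ∀ v ∈ e, u ≠ v → ¬ Reach (E.erase e) u v

lemma adjE_symm {E : Finset (Finset V)} : Symmetric (adjE E) := by
  rintro a b ⟨e, he, ha, hb⟩; exact ⟨e, he, hb, ha⟩

lemma Reach.symm {E : Finset (Finset V)} {a b : V} (h : Reach E a b) : Reach E b a :=
  by haveI : Std.Symm (adjE E) := ⟨fun a b h => adjE_symm h⟩; exact Std.Symm.symm (r := Relation.ReflTransGen (adjE E)) a b h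

lemma Reach.trans' {E : Finset (Finset V)} {a b c : V} (h : Reach E a b) (h' : Reach E b c) :
    Reach E a c := Relation.ReflTransGen.trans h h'

lemma Reach.mono {E E' : Finset (Finset V)} (hEE : E ⊆ E') {a b : V} (h : Reach E a b) :
    Reach E' a b := by
  refine Relation.ReflTransGen.mono ?_ _ _ h
  rintro x y ⟨e, he, hx, hy⟩; exact ⟨e, hEE he, hx, hy⟩

lemma reach_empty {a b : V} (h : Reach (∅ : Finset (Finset V)) a b) : a = b := by
  induction h with
  | refl => rfl
  | tail _ hadj ih => rcases hadj with ⟨e, he, -⟩; simp at he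

lemma reach_of_mem {E : Finset (Finset V)} {e : Finset V} (he : e ∈ E) {a b : V}
    (ha : a ∈ e) (hb : b ∈ e) : Reach E a b :=
  Relation.ReflTransGen.single ⟨e, he, ha, hb⟩

/-- Splitting lemma: a reach in `insert e E` either avoids `e` or hits a vertex of `e`. -/
lemma reach_insert_split {E : Finset (Finset V)} {e : Finset V} {x y : V}
    (h : Reach (insert e E) x y) :
    Reach E x y ∨ ∃ a ∈ e, Reach E x a := by
  induction h with
  | refl => exact Or.inl Relation.ReflTransGen.refl
  | tail _ hadj ih =>
    rename_i b c _
    rcases hadj with ⟨f, hf, hb, hc⟩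
    rcases Finset.mem_insert.1 hf with rfl | hf
    · rcases ih with ih | ⟨a, ha, hxa⟩
      · exact Or.inr ⟨b, hb, ih⟩
      · exact Or.inr ⟨a, ha, hxa⟩
    · rcases ih with ih | ⟨a, ha, hxa⟩
      · exact Or.inl (ih.tail ⟨f, hf, hb, hc⟩)
      · exact Or.inr ⟨a, ha, hxa⟩

/-- Chains: length-`k` edge-vertex walks. -/
def HChain (E : Finset (Finset V)) (k : ℕ) (vs : ℕ → V) (es : ℕ → Finset V) : Prop :=
  ∀ i < k, es i ∈ E ∧ vs i ∈ es i ∧ vs (i+1) ∈ es i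

lemma reach_of_chain {E : Finset (Finset V)} :
    ∀ (k : ℕ) (vs : ℕ → V) (es : ℕ → Finset V), HChain E k vs es → Reach E (vs 0) (vs k) := by
  intro k
  induction k with
  | zero => intro vs es _; exact Relation.ReflTransGen.refl
  | succ k ih =>
    intro vs es h
    have h1 : HChain E k vs es := fun i hi => h i (by omega)
    obtain ⟨he, hv1, hv2⟩ := h k (by omega)
    exact (ih vs es h1).tail ⟨es k, he, hv1, hv2⟩

lemma chain_of_reach {E : Finset (Finset V)} {u v : V} (h : Reach E u v) :
    ∃ (k : ℕ) (vs : ℕ → V) (es : ℕ → Finset V), HChain E k vs es ∧ vs 0 = u ∧ vs k = v := by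
  induction h with
  | refl => exact ⟨0, fun _ => u, fun _ => ∅, fun i hi => by omega, rfl, rfl⟩
  | tail _ hadj ih =>
    rename_i b c _
    rcases ih with ⟨k, vs, es, hch, h0, hk⟩
    rcases hadj with ⟨e, he, hb, hc⟩
    refine ⟨k+1, fun i => if i ≤ k then vs i else c, fun i => if i < k then es i else e,
      ?_, by simp [h0], by simp⟩
    intro i hi
    rcases lt_or_ge i k with hik | hik
    · have : i + 1 ≤ k := by omega
      simp only [if_pos hik, if_pos (le_of_lt hik), if_pos this]
      exact hch i hik
    · have hik' : i = k := by omega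
      subst hik'
      simp only [lt_irrefl, if_false, le_refl, if_true, if_neg (by omega : ¬ i+1 ≤ i)]
      exact ⟨he, hk ▸ hb, hc⟩


lemma chain_splice {E : Finset (Finset V)} {k : ℕ} {vs : ℕ → V} {es : ℕ → Finset V}
    (hch : HChain E k vs es) {i j : ℕ} (hij : i < j)
    (hcase : (vs i = vs j ∧ j ≤ k) ∨ (es i = es j ∧ j < k)) :
    ∃ vs' es', HChain E (k - (j - i)) vs' es' ∧ vs' 0 = vs 0 ∧ vs' (k - (j - i)) = vs k := by
  set d := j - i with hd
  have hjk : j ≤ k := by rcases hcase with ⟨_, h⟩ | ⟨_, h⟩ <;> omega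
  refine ⟨fun m => if m ≤ i then vs m else vs (m + d),
          fun m => if m < i then es m else es (m + d), ?_, by simp, ?_⟩
  · intro m hm
    rcases lt_trichotomy m i with hmi | hmi | hmi
    · simp only [if_pos hmi, if_pos (le_of_lt hmi), if_pos (by omega : m + 1 ≤ i)]
      exact hch m (by omega)
    · subst hmi
      have hjk' : j < k := by omega
      have hidj : m + d = j := by omega
      simp only [if_neg (lt_irrefl m), if_pos (le_refl m),
        if_neg (by omega : ¬ m + 1 ≤ m), hidj, (by omega : m + 1 + d = j + 1)]
      obtain ⟨hej, hvj, hvj1⟩ := hch j hjk'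
      rcases hcase with ⟨hv, _⟩ | ⟨he, _⟩
      · exact ⟨hej, hv ▸ hvj, hvj1⟩
      · exact ⟨hej, he ▸ (hch m (by omega)).2.1, hvj1⟩
    · simp only [if_neg (by omega : ¬ m < i), if_neg (by omega : ¬ m ≤ i),
        if_neg (by omega : ¬ m + 1 ≤ i)]
      have : m + 1 + d = m + d + 1 := by omega
      rw [this]
      exact hch (m + d) (by omega)
  · rcases le_or_gt (k - d) i with hki | hki
    · have hjk' : j = k := by omega
      have : k - d = i := by omega
      rw [this]
      simp only [if_pos (le_refl i)]
      rcases hcase with ⟨hv, _⟩ | ⟨_, h⟩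
      · rw [hv, hjk']
      · omega
    · simp only [if_neg (by omega : ¬ k - d ≤ i)]
      congr 1
      omega

lemma exists_inj_chain {E : Finset (Finset V)} {u v : V} (hne : u ≠ v) :
    ∀ (k : ℕ) (vs : ℕ → V) (es : ℕ → Finset V), HChain E k vs es → vs 0 = u → vs k = v →
    ∃ (k' : ℕ) (vs' : ℕ → V) (es' : ℕ → Finset V), 0 < k' ∧ HChain E k' vs' es' ∧
      vs' 0 = u ∧ vs' k' = v ∧
      (∀ i ≤ k', ∀ j ≤ k', i < j → vs' i ≠ vs' j) ∧
      (∀ i < k', ∀ j < k', i < j → es' i ≠ es' j) := by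
  intro k
  induction k using Nat.strong_induction_on with
  | _ k ih =>
    intro vs es hch h0 hk
    by_cases hv : ∃ i, ∃ j, i < j ∧ j ≤ k ∧ vs i = vs j
    · obtain ⟨i, j, hij, hjk, hvv⟩ := hv
      obtain ⟨vs', es', hch', h0', hk'⟩ := chain_splice hch hij (Or.inl ⟨hvv, hjk⟩)
      exact ih (k - (j - i)) (by omega) vs' es' hch' (h0' ▸ h0) (hk' ▸ hk)
    · by_cases he : ∃ i, ∃ j, i < j ∧ j < k ∧ es i = es j
      · obtain ⟨i, j, hij, hjk, hee⟩ := he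
        obtain ⟨vs', es', hch', h0', hk'⟩ := chain_splice hch hij (Or.inr ⟨hee, hjk⟩)
        exact ih (k - (j - i)) (by omega) vs' es' hch' (h0' ▸ h0) (hk' ▸ hk)
      · push_neg at hv he
        have hkpos : 0 < k := by
          rcases Nat.eq_zero_or_pos k with rfl | h
          · exact absurd (h0 ▸ hk) hne
          · exact h
        exact ⟨k, vs, es, hkpos, hch, h0, hk,
          fun i hi j hj hij h => hv i j hij hj h,
          fun i hi j hj hij h => he i j hij hj h⟩


/-- From reachability to a Berge path. -/
lemma berge_path_of_reach {E : Finset (Finset V)} {u v : V} (h : Reach E u v) (hne : u ≠ v) :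
    ∃ (ℓ : ℕ) (vs : Fin (ℓ + 1) → V) (es : Fin ℓ → Finset V),
      Function.Injective vs ∧ Function.Injective es ∧ (∀ i, es i ∈ E) ∧
      vs 0 = u ∧ vs (Fin.last ℓ) = v ∧
      ∀ i : Fin ℓ, vs i.castSucc ∈ es i ∧ vs i.succ ∈ es i := by
  obtain ⟨k, vs, es, hch, h0, hk⟩ := chain_of_reach h
  obtain ⟨k', vs', es', hk0, hch', h0', hk', hvinj, heinj⟩ :=
    exists_inj_chain hne k vs es hch h0 hk
  refine ⟨k', fun i => vs' i.1, fun i => es' i.1, ?_, ?_, ?_, ?_, ?_, ?_⟩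
  · intro a b hab
    by_contra hne'
    rcases lt_or_gt_of_ne (fun h => hne' (Fin.ext h) : a.1 ≠ b.1) with h' | h'
    · exact hvinj a.1 (by omega) b.1 (by omega) h' hab
    · exact hvinj b.1 (by omega) a.1 (by omega) h' hab.symm
  · intro a b hab
    by_contra hne'
    rcases lt_or_gt_of_ne (fun h => hne' (Fin.ext h) : a.1 ≠ b.1) with h' | h'
    · exact heinj a.1 a.2 b.1 b.2 h' hab
    · exact heinj b.1 b.2 a.1 a.2 h' hab.symm
  · exact fun i => (hch' i.1 i.2).1
  · simpa using h0'
  · simpa using hk'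
  · intro i
    exact ⟨(hch' i.1 i.2).2.1, (hch' i.1 i.2).2.2⟩

/-- From a Berge path to a chain. -/
lemma reach_of_berge {E : Finset (Finset V)} {u v : V} {ℓ : ℕ}
    (vs : Fin (ℓ + 1) → V) (es : Fin ℓ → Finset V) (hE : ∀ i, es i ∈ E)
    (h0 : vs 0 = u) (hl : vs (Fin.last ℓ) = v)
    (hinc : ∀ i : Fin ℓ, vs i.castSucc ∈ es i ∧ vs i.succ ∈ es i) :
    Reach E u v := by
  have : ∀ j, (hj : j ≤ ℓ) → Reach E u (vs ⟨j, Nat.lt_succ_of_le hj⟩) := by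
    intro j
    induction j with
    | zero =>
      intro _
      rw [show (⟨0, Nat.lt_succ_of_le (Nat.zero_le ℓ)⟩ : Fin (ℓ+1)) = 0 from rfl, h0]
      exact Relation.ReflTransGen.refl
    | succ j ihj =>
      intro hj
      have hj' : j < ℓ := by omega
      refine (ihj (by omega)).tail ⟨es ⟨j, hj'⟩, hE _, ?_, ?_⟩
      · exact (hinc ⟨j, hj'⟩).1
      · exact (hinc ⟨j, hj'⟩).2
  have := this ℓ le_rfl
  rwa [show (⟨ℓ, Nat.lt_succ_of_le le_rfl⟩ : Fin (ℓ+1)) = Fin.last ℓ from rfl, hl] at this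

lemma acyc_of_nocycles {E : Finset (Finset V)} (h2 : ¬ HasTwoCycle E) (hL : ¬ HasLongCycle E) :
    Acyc E := by
  intro e he u hu v hv hne hreach
  obtain ⟨k, vs, es, hch, h0, hk⟩ := chain_of_reach hreach
  obtain ⟨k', vs', es', hk0, hch', h0', hk', hvinj, heinj⟩ :=
    exists_inj_chain hne k vs es hch h0 hk
  -- every chain edge is in E and differs from e
  have hesE : ∀ i < k', es' i ∈ E ∧ es' i ≠ e := by
    intro i hi
    have := (hch' i hi).1
    exact ⟨Finset.mem_of_mem_erase this, Finset.ne_of_mem_erase this⟩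
  rcases eq_or_lt_of_le (Nat.one_le_iff_ne_zero.mpr (by omega) : 1 ≤ k') with hk1 | hk1
  · -- two-cycle
    refine h2 ⟨e, he, es' 0, (hesE 0 (by omega)).1, fun hef => (hesE 0 (by omega)).2 hef.symm, ?_⟩
    refine Finset.one_lt_card.mpr ⟨u, ?_, v, ?_, hne⟩
    · exact Finset.mem_inter.mpr ⟨hu, h0' ▸ (hch' 0 (by omega)).2.1⟩
    · have := (hch' (k'-1) (by omega)).2.2
      rw [show k' - 1 + 1 = k' from by omega, hk'] at this
      rw [show (0:ℕ) = k' - 1 from by omega]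
      exact Finset.mem_inter.mpr ⟨hv, this⟩
  · -- long cycle, k' ≥ 2
    have hkk : k' - 2 + 3 = k' + 1 := by omega
    obtain ⟨esC, vsC, hi1, hi2, hi3, hi4⟩ :
        ∃ (esC : Fin (k'+1) → Finset V) (vsC : Fin (k'+1) → V),
          Function.Injective esC ∧ Function.Injective vsC ∧ (∀ i, esC i ∈ E) ∧
          ∀ i, vsC i ∈ esC i ∧ vsC i ∈ esC (i + 1) := by
      refine ⟨fun i => if i.1 = 0 then e else es' (i.1 - 1), fun i => vs' i.1, ?_, ?_, ?_, ?_⟩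
      · intro a b hab
        dsimp only at hab
        rcases Nat.eq_zero_or_pos a.1 with ha | ha <;> rcases Nat.eq_zero_or_pos b.1 with hb | hb
        · exact Fin.ext (by omega)
        · rw [if_pos ha, if_neg (by omega)] at hab
          exact absurd hab.symm (hesE (b.1-1) (by omega)).2
        · rw [if_neg (by omega), if_pos hb] at hab
          exact absurd hab (hesE (a.1-1) (by omega)).2
        · rw [if_neg (by omega), if_neg (by omega)] at hab
          by_contra hne'
          rcases lt_or_gt_of_ne (fun h => hne' (Fin.ext h) : a.1 ≠ b.1) with h' | h'
          · exact heinj (a.1-1) (by omega) (b.1-1) (by omega) (by omega) hab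
          · exact heinj (b.1-1) (by omega) (a.1-1) (by omega) (by omega) hab.symm
      · intro a b hab
        dsimp only at hab
        by_contra hne'
        rcases lt_or_gt_of_ne (fun h => hne' (Fin.ext h) : a.1 ≠ b.1) with h' | h'
        · exact hvinj a.1 (by omega) b.1 (by omega) h' hab
        · exact hvinj b.1 (by omega) a.1 (by omega) h' hab.symm
      · intro i
        dsimp only
        rcases Nat.eq_zero_or_pos i.1 with h | h
        · rw [if_pos h]; exact he
        · rw [if_neg (by omega)]; exact (hesE (i.1-1) (by omega)).1
      · intro i
        dsimp only
        have haddval : ((i + 1 : Fin (k'+1))).1 = if i.1 = k' then 0 else i.1 + 1 := by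
          rcases eq_or_lt_of_le (Nat.lt_succ_iff.mp i.2) with h | h
          · rw [if_pos h]
            have : (i + 1 : Fin (k'+1)).1 = (i.1 + 1) % (k' + 1) := by
              simp [Fin.add_def]
            rw [this, h, Nat.mod_self]
          · rw [if_neg (by omega)]
            have : (i + 1 : Fin (k'+1)).1 = (i.1 + 1) % (k' + 1) := by
              simp [Fin.add_def]
            rw [this, Nat.mod_eq_of_lt (by omega)]
        constructor
        · rcases Nat.eq_zero_or_pos i.1 with h | h
          · rw [if_pos h, show i.1 = 0 from h, h0']; exact hu
          · rw [if_neg (by omega)]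
            have := (hch' (i.1 - 1) (by omega)).2.2
            rwa [show i.1 - 1 + 1 = i.1 from by omega] at this
        · rw [haddval]
          rcases eq_or_lt_of_le (Nat.lt_succ_iff.mp i.2) with h | h
          · rw [if_pos h, if_pos rfl, h, hk']; exact hv
          · rw [show (if i.1 = k' then 0 else i.1 + 1) = i.1 + 1 from if_neg (by omega),
              if_neg (by omega : ¬ i.1 + 1 = 0), Nat.add_sub_cancel]
            exact (hch' i.1 h).2.1
    have hcastadd : ∀ i : Fin (k' - 2 + 3), Fin.cast hkk (i + 1) = Fin.cast hkk i + 1 := by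
      intro i
      apply Fin.ext
      simp [Fin.add_def, hkk]
    refine hL ⟨k' - 2, fun i => esC (Fin.cast hkk i), fun i => vsC (Fin.cast hkk i),
      hi1.comp (Fin.cast_injective hkk), hi2.comp (Fin.cast_injective hkk),
      fun i => hi3 _, fun i => ⟨(hi4 _).1, ?_⟩⟩
    dsimp only
    rw [hcastadd i]
    exact (hi4 (Fin.cast hkk i)).2

lemma nocycles_of_acyc {E : Finset (Finset V)} (hA : Acyc E) :
    ¬ HasTwoCycle E ∧ ¬ HasLongCycle E := by
  constructor
  · rintro ⟨e, he, f, hf, hef, hcard⟩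
    obtain ⟨u, hu, v, hv, huv⟩ := Finset.one_lt_card.mp hcard
    rw [Finset.mem_inter] at hu hv
    refine hA e he u hu.1 v hv.1 huv ?_
    exact Relation.ReflTransGen.single
      ⟨f, Finset.mem_erase.mpr ⟨Ne.symm hef, hf⟩, hu.2, hv.2⟩
  · rintro ⟨ℓ, es, vs, heinj, hvinj, hE, hcyc⟩
    set e := es 0 with he0
    have hlast1 : (Fin.last (ℓ + 2) + 1 : Fin (ℓ + 3)) = 0 := by
      apply Fin.ext
      simp [Fin.add_def, Fin.last]
    have hreach : ∀ j : ℕ, (hj : j ≤ ℓ + 2) →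
        Reach (E.erase e) (vs 0) (vs ⟨j, Nat.lt_succ_of_le hj⟩) := by
      intro j
      induction j with
      | zero => intro _; exact Relation.ReflTransGen.refl
      | succ j ihj =>
        intro hj
        have hj' : j ≤ ℓ + 2 := by omega
        refine (ihj hj').tail ⟨es ⟨j+1, by omega⟩, ?_, ?_, ?_⟩
        · refine Finset.mem_erase.mpr ⟨?_, hE _⟩
          intro h
          have := heinj h
          simp only [Fin.ext_iff, Fin.val_zero] at this
          omega
        · have := (hcyc ⟨j, by omega⟩).2
          have harg : ((⟨j, by omega⟩ : Fin (ℓ+3)) + 1) = (⟨j+1, by omega⟩ : Fin (ℓ+3)) := by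
            apply Fin.ext
            simp [Fin.add_def, Nat.mod_eq_of_lt (by omega : j + 1 < ℓ + 3)]
          rwa [harg] at this
        · exact (hcyc ⟨j+1, by omega⟩).1
    have h02 : vs 0 ≠ vs (Fin.last (ℓ+2)) := by
      intro h
      have := hvinj h
      simp only [Fin.ext_iff, Fin.last, Fin.val_zero] at this
      omega
    refine hA e (hE 0) (vs 0) (hcyc 0).1 (vs (Fin.last (ℓ+2))) ?_ h02 ?_
    · have := (hcyc (Fin.last (ℓ+2))).2
      rwa [hlast1] at this
    · exact hreach (ℓ+2) le_rfl

/-- The main structural characterisation. -/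
lemma good_iff {E : Finset (Finset V)} [Nonempty V] :
    IsHypertree E ↔ ((∀ u v : V, Reach E u v) ∧ Acyc E) := by
  constructor
  · rintro ⟨hconn, h2, hL⟩
    constructor
    · intro u v
      rcases eq_or_ne u v with rfl | hne
      · exact Relation.ReflTransGen.refl
      · obtain ⟨ℓ, vs, es, _, _, hE, h0, hl, hinc⟩ := hconn u v hne
        exact reach_of_berge vs es hE h0 hl hinc
    · exact acyc_of_nocycles h2 hL
  · rintro ⟨hconn, hA⟩
    obtain ⟨h2, hL⟩ := nocycles_of_acyc hA
    exact ⟨fun u v hne => berge_path_of_reach (hconn u v) hne, h2, hL⟩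


section Forest
variable [Fintype V]

/-- A rooted forest structure: acyclic edge set plus a root function. -/
def RootedForest (E : Finset (Finset V)) (ρ : V → V) : Prop :=
  Acyc E ∧ (∀ x, Reach E x (ρ x)) ∧ ∀ x y, Reach E x y → ρ x = ρ y

def Roots (ρ : V → V) : Finset V := univ.filter (fun x => ρ x = x)

lemma RootedForest.rho_idem {E : Finset (Finset V)} {ρ : V → V} (h : RootedForest E ρ)
    (x : V) : ρ (ρ x) = ρ x := (h.2.2 _ _ (h.2.1 x)).symm

lemma RootedForest.reach_iff {E : Finset (Finset V)} {ρ : V → V} (h : RootedForest E ρ)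
    {x y : V} : Reach E x y ↔ ρ x = ρ y := by
  constructor
  · exact h.2.2 x y
  · intro hxy
    exact (h.2.1 x).trans' (hxy ▸ (h.2.1 y).symm)

lemma acyc_erase {E : Finset (Finset V)} (hA : Acyc E) (e : Finset V) : Acyc (E.erase e) := by
  intro f hf u hu v hv huv hr
  exact hA f (mem_of_mem_erase hf) u hu v hv huv
    (hr.mono (erase_subset_erase _ (erase_subset _ _)))

section Up
variable {E' : Finset (Finset V)} {ρ' : V → V} {v : V} {S : Finset V}

/-- conditions for adding an edge -/
structure UpOK (E' : Finset (Finset V)) (ρ' : V → V) (v : V) (S : Finset V) : Prop where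
  hRF : RootedForest E' ρ'
  hSroots : ∀ b ∈ S, ρ' b = b
  hvS : ρ' v ∉ S
  hSne : S.Nonempty

def upE (E' : Finset (Finset V)) (v : V) (S : Finset V) : Finset (Finset V) :=
  insert (insert v S) E'

def upρ (ρ' : V → V) (v : V) (S : Finset V) : V → V :=
  fun x => if ρ' x ∈ S then ρ' v else ρ' x

lemma UpOK.v_not_S (h : UpOK E' ρ' v S) : v ∉ S :=
  fun hv => h.hvS (by rwa [h.hSroots v hv])

lemma UpOK.pairwise (h : UpOK E' ρ' v S) :
    ∀ a ∈ insert v S, ∀ b ∈ insert v S, a ≠ b → ¬ Reach E' a b := by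
  intro a ha b hb hab hr
  have key : ∀ x ∈ S, ∀ y ∈ insert v S, x ≠ y → ¬ Reach E' x y := by
    intro x hx y hy hxy hr
    have hxr := h.hSroots x hx
    rcases mem_insert.1 hy with rfl | hy
    · exact h.hvS (by rw [h.hRF.2.2 _ _ hr.symm, hxr]; exact hx)
    · have := h.hRF.2.2 _ _ hr
      rw [hxr, h.hSroots y hy] at this
      exact hxy this
  rcases mem_insert.1 ha with rfl | ha
  · rcases mem_insert.1 hb with rfl | hb
    · exact hab rfl
    · exact key b hb a (mem_insert_self _ _) hab.symm hr.symm
  · exact key a ha b hb hab hr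

lemma UpOK.edge_card (h : UpOK E' ρ' v S) : (insert v S).card = S.card + 1 :=
  card_insert_of_notMem h.v_not_S

lemma UpOK.edge_notmem (h : UpOK E' ρ' v S) : insert v S ∉ E' := by
  intro hmem
  obtain ⟨b, hb⟩ := h.hSne
  exact h.pairwise v (mem_insert_self _ _) b (mem_insert_of_mem hb)
    (fun hvb => h.v_not_S (hvb ▸ hb))
    (reach_of_mem hmem (mem_insert_self _ _) (mem_insert_of_mem hb))

lemma UpOK.card (h : UpOK E' ρ' v S) : (upE E' v S).card = E'.card + 1 :=
  card_insert_of_notMem h.edge_notmem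

lemma UpOK.acyc (h : UpOK E' ρ' v S) : Acyc (upE E' v S) := by
  intro f hf u hu w hw huw hr
  rcases mem_insert.1 hf with rfl | hf
  · rw [upE, erase_insert h.edge_notmem] at hr
    exact h.pairwise u hu w hw huw hr
  · have hfe : f ≠ insert v S := fun hfe => h.edge_notmem (hfe ▸ hf)
    have hrw : Reach (insert (insert v S) (E'.erase f)) u w := by
      refine hr.mono ?_
      intro g hg
      rw [mem_erase] at hg
      rcases mem_insert.1 hg.2 with rfl | hg2
      · exact mem_insert_self _ _
      · exact mem_insert_of_mem (mem_erase.mpr ⟨hg.1, hg2⟩)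
    have hEf : E'.erase f ⊆ E' := erase_subset _ _
    rcases reach_insert_split hrw with hr' | ⟨a, ha, hra⟩
    · exact h.hRF.1 f hf u hu w hw huw hr'
    · rcases reach_insert_split ((Reach.symm hrw)) with hr' | ⟨b, hb, hrb⟩
      · exact h.hRF.1 f hf u hu w hw huw hr'.symm
      · -- u ~ a, w ~ b (in E'.erase f), a b ∈ insert v S
        have huw' : Reach E' u w := reach_of_mem hf hu hw
        have hab : Reach E' a b :=
          ((hra.mono hEf).symm.trans' huw').trans' (hrb.mono hEf)
        have hab' : a = b := by
          by_contra hne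
          exact h.pairwise a ha b hb hne hab
        subst hab'
        exact h.hRF.1 f hf u hu w hw huw
          ((hra.trans' hrb.symm))

lemma UpOK.reach_root (h : UpOK E' ρ' v S) :
    ∀ x, Reach (upE E' v S) x (upρ ρ' v S x) := by
  intro x
  have hsub : E' ⊆ upE E' v S := subset_insert _ _
  unfold upρ
  split_ifs with hx
  · -- x ~ ρ' x ∈ S ⊆ e ∋ v ~ ρ' v
    have h1 : Reach (upE E' v S) x (ρ' x) := (h.hRF.2.1 x).mono hsub
    have h2 : Reach (upE E' v S) (ρ' x) v :=
      reach_of_mem (mem_insert_self _ _) (mem_insert_of_mem hx) (mem_insert_self _ _)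
    have h3 : Reach (upE E' v S) v (ρ' v) := (h.hRF.2.1 v).mono hsub
    exact (h1.trans' h2).trans' h3
  · exact (h.hRF.2.1 x).mono hsub

lemma UpOK.const (h : UpOK E' ρ' v S) :
    ∀ x y, Reach (upE E' v S) x y → upρ ρ' v S x = upρ ρ' v S y := by
  intro x y hr
  rcases reach_insert_split hr with hr' | ⟨a, ha, hra⟩
  · unfold upρ; rw [h.hRF.2.2 _ _ hr']
  · rcases reach_insert_split hr.symm with hr' | ⟨b, hb, hrb⟩
    · unfold upρ; rw [h.hRF.2.2 _ _ hr']
    · have hxa : upρ ρ' v S x = ρ' v := by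
        unfold upρ
        rcases mem_insert.1 ha with rfl | ha'
        · rw [h.hRF.2.2 _ _ hra]
          split_ifs with hx
          · rfl
          · rfl
        · rw [h.hRF.2.2 _ _ hra, h.hSroots a ha', if_pos ha']
      have hyb : upρ ρ' v S y = ρ' v := by
        unfold upρ
        rcases mem_insert.1 hb with rfl | hb'
        · rw [h.hRF.2.2 _ _ hrb]
          split_ifs with hy
          · rfl
          · rfl
        · rw [h.hRF.2.2 _ _ hrb, h.hSroots b hb', if_pos hb']
      rw [hxa, hyb]

lemma UpOK.rf (h : UpOK E' ρ' v S) : RootedForest (upE E' v S) (upρ ρ' v S) :=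
  ⟨h.acyc, h.reach_root, h.const⟩

lemma UpOK.roots (h : UpOK E' ρ' v S) : Roots (upρ ρ' v S) = Roots ρ' \ S := by
  ext x
  simp only [Roots, mem_filter, mem_univ, true_and, mem_sdiff]; simp only [upρ]
  constructor
  · intro hx
    split_ifs at hx with hS
    · -- x = ρ' v, then ρ' x = ρ' v ∉ S, contradiction with hS
      exfalso
      rw [← hx] at hS
      rw [h.hRF.rho_idem v] at hS
      exact h.hvS hS
    · exact ⟨hx, fun hxS => hS (hx.symm ▸ hxS)⟩
  · rintro ⟨hx, hxS⟩
    rw [if_neg (by rwa [hx]), hx]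
end Up

section Inj
variable {E' : Finset (Finset V)} {ρ' : V → V} {v : V} {S : Finset V}

lemma UpOK.top_char (h : UpOK E' ρ' v S) {a : V} (ha : a ∈ insert v S)
    (hr : Reach E' a (upρ ρ' v S a)) : a = v := by
  rcases mem_insert.1 ha with rfl | haS
  · rfl
  · exfalso
    have hro : ρ' a = a := h.hSroots a haS
    have hupa : upρ ρ' v S a = ρ' v := by
      unfold upρ; rw [hro, if_pos haS]
    rw [hupa] at hr
    have : ρ' a = ρ' (ρ' v) := h.hRF.2.2 _ _ hr
    rw [hro, h.hRF.rho_idem] at this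
    exact h.hvS (this ▸ haS)

lemma UpOK.top_reach (h : UpOK E' ρ' v S) : Reach E' v (upρ ρ' v S v) := by
  have : upρ ρ' v S v = ρ' v := by unfold upρ; rw [if_neg h.hvS]
  rw [this]; exact h.hRF.2.1 v

lemma UpOK.rho'_pos (h : UpOK E' ρ' v S) {x b : V} (hb : b ∈ S) (hr : Reach E' x b) :
    ρ' x = b := by
  rw [h.hRF.2.2 _ _ hr, h.hSroots b hb]

lemma UpOK.rho'_neg (h : UpOK E' ρ' v S) {x : V} (hx : ¬ ∃ b, b ∈ S ∧ Reach E' x b) :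
    ρ' x = upρ ρ' v S x := by
  unfold upρ
  rw [if_neg (fun hmem => hx ⟨ρ' x, hmem, h.hRF.2.1 x⟩)]

lemma up_inj {E' : Finset (Finset V)} {ρ'₁ ρ'₂ : V → V} {v₁ v₂ : V} {S₁ S₂ : Finset V}
    (h₁ : UpOK E' ρ'₁ v₁ S₁) (h₂ : UpOK E' ρ'₂ v₂ S₂)
    (he : insert v₁ S₁ = insert v₂ S₂) (hρ : upρ ρ'₁ v₁ S₁ = upρ ρ'₂ v₂ S₂) :
    v₁ = v₂ ∧ S₁ = S₂ ∧ ρ'₁ = ρ'₂ := by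
  have hv : v₁ = v₂ := by
    refine h₂.top_char (he ▸ mem_insert_self v₁ S₁) ?_
    rw [← hρ]
    exact h₁.top_reach
  subst hv
  have hS : S₁ = S₂ := by
    rw [← erase_insert h₁.v_not_S, he, erase_insert h₂.v_not_S]
  subst hS
  refine ⟨rfl, rfl, funext fun x => ?_⟩
  by_cases hx : ∃ b, b ∈ S₁ ∧ Reach E' x b
  · obtain ⟨b, hb, hr⟩ := hx
    rw [h₁.rho'_pos hb hr, h₂.rho'_pos hb hr]
  · rw [h₁.rho'_neg hx, h₂.rho'_neg hx, hρ]
end Inj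

lemma down_exists {E : Finset (Finset V)} {ρ : V → V} (hRF : RootedForest E ρ)
    {e : Finset V} (he : e ∈ E) (hcard : 2 ≤ e.card) :
    ∃ (v : V) (S : Finset V) (ρ' : V → V), UpOK (E.erase e) ρ' v S ∧
      insert v S = e ∧ upE (E.erase e) v S = E ∧ upρ ρ' v S = ρ := by
  classical
  set E' := E.erase e with hE'
  have hEins : E = insert e E' := (insert_erase he).symm
  have hco : ∀ u ∈ e, ∀ u' ∈ e, ρ u = ρ u' := fun u hu u' hu' =>
    hRF.2.2 _ _ (reach_of_mem he hu hu')
  have hene : e.Nonempty := Finset.card_pos.mp (by omega)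
  obtain ⟨u0, hu0⟩ := hene
  -- find the top vertex
  obtain ⟨a, ha, hra⟩ : ∃ a ∈ e, Reach E' a (ρ a) := by
    have h1 : Reach E (ρ u0) u0 := (hRF.2.1 u0).symm
    rw [hEins] at h1
    rcases reach_insert_split h1 with h2 | ⟨a, ha, h2⟩
    · exact ⟨u0, hu0, h2.symm⟩
    · refine ⟨a, ha, ?_⟩
      rw [hco a ha u0 hu0]
      exact h2.symm
  set S := e.erase a with hS
  -- uniqueness of a vertex of e connected to x in E'
  have huniq : ∀ (x b b' : V), b ∈ e → b' ∈ e → Reach E' x b → Reach E' x b' → b = b' := by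
    intro x b b' hb hb' hrb hrb'
    by_contra hne
    exact hRF.1 e he b hb b' hb' hne (hrb.symm.trans' hrb')
  set ρ' : V → V := fun x => if h : ∃ b, b ∈ S ∧ Reach E' x b then h.choose else ρ x with hρ'
  have hρ'pos : ∀ (x b : V), b ∈ S → Reach E' x b → ρ' x = b := by
    intro x b hb hr
    have hex : ∃ b, b ∈ S ∧ Reach E' x b := ⟨b, hb, hr⟩
    have hspec := hex.choose_spec
    rw [hρ']
    simp only [dif_pos hex]
    exact huniq x _ b (mem_of_mem_erase hspec.1) (mem_of_mem_erase hb) hspec.2 hr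
  have hρ'neg : ∀ x : V, (¬ ∃ b, b ∈ S ∧ Reach E' x b) → ρ' x = ρ x := by
    intro x hx
    rw [hρ']
    simp only [dif_neg hx]
  have hAc' : Acyc E' := acyc_erase hRF.1 e
  have hSsub : S ⊆ e := erase_subset _ _
  have haS : a ∉ S := notMem_erase _ _
  have hins : insert a S = e := insert_erase ha
  -- no vertex of e other than a is E'-connected to a
  have hnotconn : ∀ b ∈ S, ¬ Reach E' a b := by
    intro b hb hr
    exact hRF.1 e he a ha b (hSsub hb) (fun h => haS (h ▸ hb)) hr
  have hρ'a : ρ' a = ρ a := hρ'neg a (fun ⟨b, hb, hr⟩ => hnotconn b hb hr)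
  have hρaS : ρ a ∉ S := by
    intro hmem
    refine hRF.1 e he a ha (ρ a) (hSsub hmem) ?_ hra
    intro h
    rw [← h] at hmem
    exact haS hmem
  -- ρ' is a valid root function for E'
  have hreach' : ∀ x, Reach E' x (ρ' x) := by
    intro x
    by_cases hx : ∃ b, b ∈ S ∧ Reach E' x b
    · obtain ⟨b, hb, hr⟩ := hx
      rw [hρ'pos x b hb hr]
      exact hr
    · rw [hρ'neg x hx]
      have h1 : Reach E x (ρ x) := hRF.2.1 x
      rw [hEins] at h1
      rcases reach_insert_split h1 with h2 | ⟨c, hc, h2⟩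
      · exact h2
      · have hca : c = a := by
          by_contra hne
          exact hx ⟨c, mem_erase.mpr ⟨hne, hc⟩, h2⟩
        have hρx : ρ x = ρ c := hRF.2.2 _ _ (h2.mono (erase_subset _ _))
        rw [hρx, hco c hc a ha]
        exact (hca ▸ h2).trans' hra
  have hconst' : ∀ x y, Reach E' x y → ρ' x = ρ' y := by
    intro x y hr
    by_cases hx : ∃ b, b ∈ S ∧ Reach E' x b
    · obtain ⟨b, hb, hrb⟩ := hx
      rw [hρ'pos x b hb hrb, hρ'pos y b hb (hr.symm.trans' hrb)]
    · have hy : ¬ ∃ b, b ∈ S ∧ Reach E' y b := by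
        rintro ⟨b, hb, hrb⟩
        exact hx ⟨b, hb, hr.trans' hrb⟩
      rw [hρ'neg x hx, hρ'neg y hy]
      exact hRF.2.2 _ _ (hr.mono (erase_subset _ _))
  have hRF' : RootedForest E' ρ' := ⟨hAc', hreach', hconst'⟩
  have hSne : S.Nonempty := by
    rw [hS]
    rw [← Finset.card_pos, Finset.card_erase_of_mem ha]
    omega
  have hOK : UpOK E' ρ' a S :=
    ⟨hRF', fun b hb => hρ'pos b b hb Relation.ReflTransGen.refl, hρ'a ▸ hρaS, hSne⟩
  refine ⟨a, S, ρ', hOK, hins, ?_, ?_⟩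
  · rw [upE, hins, ← hEins]
  · funext x
    unfold upρ
    by_cases hx : ∃ b, b ∈ S ∧ Reach E' x b
    · obtain ⟨b, hb, hrb⟩ := hx
      rw [hρ'pos x b hb hrb, if_pos hb, hρ'a]
      have : ρ x = ρ b := hRF.2.2 _ _ (hrb.mono (erase_subset _ _))
      rw [this, hco b (hSsub hb) a ha]
    · rw [hρ'neg x hx]
      rw [if_neg (fun hmem => hx ⟨ρ x, hmem, (hρ'neg x hx) ▸ hreach' x⟩)]

/-- The type of `r`-uniform rooted forests with `k` edges. -/
def RFSet (V : Type*) [DecidableEq V] [Fintype V] (r k : ℕ) : Type _ :=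
  {p : Finset (Finset V) × (V → V) // p.1.card = k ∧ UniformR r p.1 ∧ RootedForest p.1 p.2}

instance (r k : ℕ) : Finite (RFSet V r k) := by
  unfold RFSet; infer_instance

lemma roots_card_aux {r : ℕ} (hr : 2 ≤ r) :
    ∀ (k : ℕ) (E : Finset (Finset V)) (ρ : V → V), E.card = k → UniformR r E →
      RootedForest E ρ → (Roots ρ).card + k * (r-1) = Fintype.card V := by
  intro k
  induction k with
  | zero =>
    intro E ρ hcard hunif hRF
    have hE : E = ∅ := card_eq_zero.mp hcard
    subst hE
    have hid : ∀ x, ρ x = x := fun x => (reach_empty (hRF.2.1 x)).symm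
    have : Roots ρ = univ := by
      apply Finset.eq_univ_of_forall
      intro x
      exact mem_filter.mpr ⟨mem_univ _, hid x⟩
    rw [this]
    simp
  | succ k ih =>
    intro E ρ hcard hunif hRF
    have hEne : E.Nonempty := card_pos.mp (by omega)
    obtain ⟨e, he⟩ := hEne
    have hecard : e.card = r := hunif e he
    obtain ⟨v, S, ρ', hOK, hins, hupE, hupρ⟩ := down_exists hRF he (by omega)
    have hE'card : (E.erase e).card = k := by
      rw [card_erase_of_mem he, hcard]
      omega
    have hunif' : UniformR r (E.erase e) := fun f hf => hunif f (mem_of_mem_erase hf)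
    have IH := ih (E.erase e) ρ' hE'card hunif' hOK.hRF
    have hroots : Roots ρ = Roots ρ' \ S := by rw [← hupρ]; exact hOK.roots
    have hssub : S ⊆ Roots ρ' := fun b hb => mem_filter.mpr ⟨mem_univ _, hOK.hSroots b hb⟩
    have hScard : S.card = r - 1 := by
      have h1 : (insert v S).card = S.card + 1 := card_insert_of_notMem hOK.v_not_S
      rw [hins, hecard] at h1
      omega
    have h2 : (Roots ρ).card = (Roots ρ').card - (r-1) := by
      rw [hroots, card_sdiff_of_subset hssub, hScard]
    have hle : S.card ≤ (Roots ρ').card := card_le_card hssub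
    have h3 : (k+1) * (r-1) = k*(r-1) + (r-1) := by ring
    omega

lemma rf0_card (r : ℕ) : Nat.card (RFSet V r 0) = 1 := by
  have s0 : RFSet V r 0 := ⟨(∅, id), rfl, fun e he => absurd he (notMem_empty e),
    fun e he => absurd he (notMem_empty e),
    fun x => Relation.ReflTransGen.refl,
    fun x y h => by rw [reach_empty h]⟩
  haveI : Inhabited (RFSet V r 0) := ⟨s0⟩
  haveI : Subsingleton (RFSet V r 0) := by
    constructor
    rintro ⟨⟨E₁, ρ₁⟩, hc₁, hu₁, hRF₁⟩ ⟨⟨E₂, ρ₂⟩, hc₂, hu₂, hRF₂⟩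
    have hE₁ : E₁ = ∅ := card_eq_zero.mp hc₁
    have hE₂ : E₂ = ∅ := card_eq_zero.mp hc₂
    subst hE₁; subst hE₂
    have hρ : ρ₁ = ρ₂ := by
      funext x
      exact (reach_empty (hRF₁.2.1 x)).symm.trans (reach_empty (hRF₂.2.1 x))
    subst hρ
    rfl
  haveI : Unique (RFSet V r 0) := Unique.mk' _
  exact Nat.card_unique

/-- step data attachable to a rooted forest -/
abbrev StepT (r k : ℕ) (s : RFSet V r k) : Type _ :=
  {q : V × Finset V // (∀ b ∈ q.2, s.1.2 b = b) ∧ s.1.2 q.1 ∉ q.2 ∧ q.2.card = r - 1}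

lemma upOK_of_step {r k : ℕ} (hr : 2 ≤ r) (s : RFSet V r k) (q : StepT r k s) :
    UpOK s.1.1 s.1.2 q.1.1 q.1.2 :=
  ⟨s.2.2.2, q.2.1, q.2.2.1, card_pos.mp (by rw [q.2.2.2]; omega)⟩

def upFun {r k : ℕ} (hr : 2 ≤ r) :
    (Σ s : RFSet V r k, StepT r k s) → (Σ s : RFSet V r (k+1), {e : Finset V // e ∈ s.1.1}) :=
  fun m => ⟨⟨(upE m.1.1.1 m.2.1.1 m.2.1.2, upρ m.1.1.2 m.2.1.1 m.2.1.2),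
    by rw [(upOK_of_step hr m.1 m.2).card, m.1.2.1],
    by
      intro f hf
      rcases mem_insert.1 hf with rfl | hf2
      · rw [card_insert_of_notMem (upOK_of_step hr m.1 m.2).v_not_S, m.2.2.2.2]
        omega
      · exact m.1.2.2.1 f hf2,
    (upOK_of_step hr m.1 m.2).rf⟩,
    ⟨insert m.2.1.1 m.2.1.2, mem_insert_self _ _⟩⟩

lemma sigEdge_ext {r k : ℕ} (m₁ m₂ : Σ s : RFSet V r (k+1), {e : Finset V // e ∈ s.1.1})
    (h1 : m₁.1.1 = m₂.1.1) (h2 : m₁.2.1 = m₂.2.1) : m₁ = m₂ := by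
  obtain ⟨⟨p₁, hp₁⟩, e₁, he₁⟩ := m₁
  obtain ⟨⟨p₂, hp₂⟩, e₂, he₂⟩ := m₂
  dsimp at h1 h2
  subst h1; subst h2; rfl

lemma sigStep_ext {r k : ℕ} (m₁ m₂ : Σ s : RFSet V r k, StepT r k s)
    (h1 : m₁.1.1 = m₂.1.1) (h2 : m₁.2.1 = m₂.2.1) : m₁ = m₂ := by
  obtain ⟨⟨p₁, hp₁⟩, q₁, hq₁⟩ := m₁
  obtain ⟨⟨p₂, hp₂⟩, q₂, hq₂⟩ := m₂
  dsimp at h1 h2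
  subst h1; subst h2; rfl

lemma upFun_inj {r k : ℕ} (hr : 2 ≤ r) : Function.Injective (upFun (V := V) (r := r) (k := k) hr) := by
  intro m₁ m₂ h
  have hOK₁ := upOK_of_step hr m₁.1 m₁.2
  have hOK₂ := upOK_of_step hr m₂.1 m₂.2
  have he : insert m₁.2.1.1 m₁.2.1.2 = insert m₂.2.1.1 m₂.2.1.2 :=
    congrArg (fun m => m.2.1) h
  have hEρ : (upE m₁.1.1.1 m₁.2.1.1 m₁.2.1.2, upρ m₁.1.1.2 m₁.2.1.1 m₁.2.1.2)
      = (upE m₂.1.1.1 m₂.2.1.1 m₂.2.1.2, upρ m₂.1.1.2 m₂.2.1.1 m₂.2.1.2) :=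
    congrArg (fun m => m.1.1) h
  have hE : upE m₁.1.1.1 m₁.2.1.1 m₁.2.1.2 = upE m₂.1.1.1 m₂.2.1.1 m₂.2.1.2 :=
    congrArg Prod.fst hEρ
  have hρ : upρ m₁.1.1.2 m₁.2.1.1 m₁.2.1.2 = upρ m₂.1.1.2 m₂.2.1.1 m₂.2.1.2 :=
    congrArg Prod.snd hEρ
  have hE' : m₁.1.1.1 = m₂.1.1.1 := by
    have h1 : m₁.1.1.1 = (upE m₁.1.1.1 m₁.2.1.1 m₁.2.1.2).erase (insert m₁.2.1.1 m₁.2.1.2) := by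
      rw [upE, erase_insert hOK₁.edge_notmem]
    rw [h1, hE, he, upE, erase_insert hOK₂.edge_notmem]
  have hOK₂' : UpOK m₁.1.1.1 m₂.1.1.2 m₂.2.1.1 m₂.2.1.2 := hE' ▸ hOK₂
  obtain ⟨hv, hS, hρ'⟩ := up_inj hOK₁ hOK₂' he hρ
  refine sigStep_ext m₁ m₂ ?_ ?_
  · exact Prod.ext hE' hρ'
  · exact Prod.ext hv hS

lemma upFun_surj {r k : ℕ} (hr : 2 ≤ r) : Function.Surjective (upFun (V := V) (r := r) (k := k) hr) := by
  rintro ⟨⟨⟨E, ρ⟩, hc, hu, hRF⟩, e, he⟩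
  have hecard : e.card = r := hu e he
  obtain ⟨v, S, ρ', hOK, hins, hupE, hupρ⟩ := down_exists hRF he (by omega)
  have hScard : S.card = r - 1 := by
    have h1 : (insert v S).card = S.card + 1 := card_insert_of_notMem hOK.v_not_S
    rw [hins, hecard] at h1
    omega
  refine ⟨⟨⟨(E.erase e, ρ'), ?_, ?_, hOK.hRF⟩, ⟨(v, S), hOK.hSroots, hOK.hvS, hScard⟩⟩, ?_⟩
  · rw [card_erase_of_mem he, hc]
    omega
  · exact fun f hf => hu f (mem_of_mem_erase hf)
  · exact sigEdge_ext _ _ (Prod.ext hupE hupρ) hins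

lemma stepT_card {r k : ℕ} (hr : 2 ≤ r) (s : RFSet V r k) :
    Nat.card (StepT r k s) =
      Fintype.card V * (Fintype.card V - k*(r-1) - 1).choose (r-1) := by
  classical
  have e1 : StepT r k s ≃
      Σ v : V, {S : Finset V // S ∈ Finset.powersetCard (r-1) ((Roots s.1.2).erase (s.1.2 v))} :=
  { toFun := fun q => ⟨q.1.1, ⟨q.1.2, by
      rw [mem_powersetCard]
      refine ⟨?_, q.2.2.2⟩
      intro b hb
      rw [mem_erase]
      exact ⟨fun h => q.2.2.1 (h ▸ hb), mem_filter.mpr ⟨mem_univ _, q.2.1 b hb⟩⟩⟩⟩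
    invFun := fun p => ⟨(p.1, p.2.1), by
      have hmem := mem_powersetCard.mp p.2.2
      refine ⟨?_, ?_, hmem.2⟩
      · intro b hb
        exact (mem_filter.mp (mem_of_mem_erase (hmem.1 hb))).2
      · intro hin
        exact (mem_erase.mp (hmem.1 hin)).1 rfl⟩
    left_inv := fun q => by obtain ⟨⟨v, S⟩, h⟩ := q; rfl
    right_inv := fun p => by obtain ⟨v, S, h⟩ := p; rfl }
  rw [Nat.card_congr e1, Nat.card_eq_fintype_card, Fintype.card_sigma]
  have hroot : ∀ v : V, ((Roots s.1.2).erase (s.1.2 v)).card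
      = Fintype.card V - k*(r-1) - 1 := by
    intro v
    rw [card_erase_of_mem
      (show s.1.2 v ∈ Roots s.1.2 from mem_filter.mpr ⟨mem_univ _, s.2.2.2.rho_idem v⟩)]
    have := roots_card_aux hr k s.1.1 s.1.2 s.2.1 s.2.2.1 s.2.2.2
    omega
  simp only [Fintype.card_coe, card_powersetCard, hroot]
  rw [sum_const, card_univ, smul_eq_mul]

lemma card_step {r : ℕ} (hr : 2 ≤ r) (k : ℕ) :
    Nat.card (RFSet V r (k+1)) * (k+1) =
      Nat.card (RFSet V r k) *
        (Fintype.card V * (Fintype.card V - k*(r-1) - 1).choose (r-1)) := by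
  classical
  have hcardeq : Nat.card (Σ s : RFSet V r k, StepT r k s)
      = Nat.card (Σ s : RFSet V r (k+1), {e : Finset V // e ∈ s.1.1}) :=
    Nat.card_congr (Equiv.ofBijective _ ⟨upFun_inj (V := V) (r := r) (k := k) hr, upFun_surj hr⟩)
  haveI := Fintype.ofFinite (RFSet V r (k+1))
  haveI := Fintype.ofFinite (RFSet V r k)
  have hA : Nat.card (Σ s : RFSet V r (k+1), {e : Finset V // e ∈ s.1.1})
      = Nat.card (RFSet V r (k+1)) * (k+1) := by
    rw [Nat.card_eq_fintype_card, Fintype.card_sigma, Nat.card_eq_fintype_card]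
    have h1 : ∀ s : RFSet V r (k+1), Fintype.card {e // e ∈ s.1.1} = k+1 := by
      intro s
      rw [Fintype.card_coe, s.2.1]
    simp only [h1]
    rw [sum_const, card_univ, smul_eq_mul]
  have hB : Nat.card (Σ s : RFSet V r k, StepT r k s)
      = Nat.card (RFSet V r k) *
        (Fintype.card V * (Fintype.card V - k*(r-1) - 1).choose (r-1)) := by
    rw [Nat.card_eq_fintype_card, Fintype.card_sigma, Nat.card_eq_fintype_card]
    have h1 : ∀ s : RFSet V r k, Fintype.card (StepT r k s)
        = Fintype.card V * (Fintype.card V - k*(r-1) - 1).choose (r-1) :=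
      fun s => (Nat.card_eq_fintype_card (α := StepT r k s)).symm.trans (stepT_card hr s)
    simp only [h1]
    rw [sum_const, card_univ, smul_eq_mul]
  rw [← hA, ← hcardeq, hB]

lemma card_prod {r : ℕ} (hr : 2 ≤ r) :
    ∀ k, Nat.card (RFSet V r k) * (k.factorial) =
      ∏ j ∈ Finset.range k,
        (Fintype.card V * (Fintype.card V - j*(r-1) - 1).choose (r-1)) := by
  intro k
  induction k with
  | zero => simp [rf0_card]
  | succ k ih =>
    rw [prod_range_succ, ← ih]
    calc Nat.card (RFSet V r (k+1)) * (k+1).factorial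
        = Nat.card (RFSet V r (k+1)) * (k+1) * k.factorial := by
          rw [Nat.factorial_succ]; ring
      _ = Nat.card (RFSet V r k) *
            (Fintype.card V * (Fintype.card V - k*(r-1) - 1).choose (r-1)) * k.factorial := by
          rw [card_step hr k]
      _ = Nat.card (RFSet V r k) * k.factorial *
            (Fintype.card V * (Fintype.card V - k*(r-1) - 1).choose (r-1)) := by ring

lemma rf_top_card {n r t : ℕ} (hn : 2 ≤ n) (hr : 2 ≤ r) (hnt : n - 1 = t * (r - 1)) :
    Nat.card (RFSet (Fin n) r t) =
      Nat.card {E : Finset (Finset (Fin n)) // IsHypertree E ∧ UniformR r E} * n := by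
  haveI : Nonempty (Fin n) := ⟨⟨0, by omega⟩⟩
  have hconst : ∀ s : RFSet (Fin n) r t, ∀ x y : Fin n, s.1.2 x = s.1.2 y := by
    intro s x y
    have hm := roots_card_aux hr t s.1.1 s.1.2 s.2.1 s.2.2.1 s.2.2.2
    rw [Fintype.card_fin] at hm
    have h1 : (Roots s.1.2).card = 1 := by omega
    obtain ⟨w, hw⟩ := card_eq_one.mp h1
    have hx : s.1.2 x ∈ Roots s.1.2 := mem_filter.mpr ⟨mem_univ _, s.2.2.2.rho_idem x⟩
    have hy : s.1.2 y ∈ Roots s.1.2 := mem_filter.mpr ⟨mem_univ _, s.2.2.2.rho_idem y⟩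
    rw [hw, mem_singleton] at hx hy
    rw [hx, hy]
  have hconn : ∀ s : RFSet (Fin n) r t, ∀ u v : Fin n, Reach s.1.1 u v :=
    fun s u v => s.2.2.2.reach_iff.mpr (hconst s u v)
  have hcardE : ∀ (E : Finset (Finset (Fin n))), IsHypertree E → UniformR r E →
      E.card = t := by
    intro E htree hunif
    obtain ⟨hco, hac⟩ := good_iff.mp htree
    have hRF : RootedForest E (fun _ => (⟨0, by omega⟩ : Fin n)) :=
      ⟨hac, fun x => hco x _, fun _ _ _ => rfl⟩
    have hm := roots_card_aux hr E.card E _ rfl hunif hRF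
    rw [Fintype.card_fin] at hm
    have hrw : Roots (fun _ : Fin n => (⟨0, by omega⟩ : Fin n)) = {(⟨0, by omega⟩ : Fin n)} := by
      ext x
      simp only [Roots, mem_filter, mem_univ, true_and, mem_singleton]
      exact ⟨fun h => h.symm, fun h => h.symm⟩
    rw [hrw, card_singleton] at hm
    have h2 : E.card * (r-1) = t * (r-1) := by omega
    exact Nat.eq_of_mul_eq_mul_right (by omega) h2
  have e1 : RFSet (Fin n) r t ≃
      {E : Finset (Finset (Fin n)) // IsHypertree E ∧ UniformR r E} × Fin n :=
  { toFun := fun s => (⟨s.1.1, good_iff.mpr ⟨hconn s, s.2.2.2.1⟩, s.2.2.1⟩,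
      s.1.2 ⟨0, by omega⟩)
    invFun := fun p => ⟨(p.1.1, fun _ => p.2), hcardE p.1.1 p.1.2.1 p.1.2.2, p.1.2.2,
      (good_iff.mp p.1.2.1).2, fun x => (good_iff.mp p.1.2.1).1 x p.2, fun _ _ _ => rfl⟩
    left_inv := fun s => by
      apply Subtype.ext
      exact Prod.ext rfl (funext fun x => hconst s _ x)
    right_inv := fun p => by
      apply Prod.ext
      · exact Subtype.ext rfl
      · rfl }
  rw [Nat.card_congr e1, Nat.card_prod, Nat.card_eq_fintype_card (α := Fin n), Fintype.card_fin]

lemma prod_choose_aux {r : ℕ} (hr : 2 ≤ r) (t : ℕ) :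
    (∏ j ∈ Finset.range t, ((j+1)*(r-1)).choose (r-1)) * ((r-1).factorial)^t
      = (t*(r-1)).factorial := by
  induction t with
  | zero => simp
  | succ t ih =>
    rw [prod_range_succ, pow_succ]
    calc (∏ j ∈ Finset.range t, ((j+1)*(r-1)).choose (r-1)) * ((t+1)*(r-1)).choose (r-1) *
          ((r-1).factorial ^ t * (r-1).factorial)
        = ((∏ j ∈ Finset.range t, ((j+1)*(r-1)).choose (r-1)) * ((r-1).factorial)^t) *
          (((t+1)*(r-1)).choose (r-1) * (r-1).factorial) := by ring
      _ = (t*(r-1)).factorial * (((t+1)*(r-1)).choose (r-1) * (r-1).factorial) := by rw [ih]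
      _ = (t*(r-1)+(r-1)).choose (r-1) * (t*(r-1)).factorial * (r-1).factorial := by
          rw [show (t+1)*(r-1) = t*(r-1)+(r-1) from by ring]; ring
      _ = ((t+1)*(r-1)).factorial := by
          rw [show (t+1)*(r-1) = t*(r-1)+(r-1) from by ring]
          exact Nat.add_choose_mul_factorial_mul_factorial (t*(r-1)) (r-1)

lemma prod_choose {r : ℕ} (hr : 2 ≤ r) (t : ℕ) :
    (∏ j ∈ Finset.range t, ((t-j)*(r-1)).choose (r-1)) * ((r-1).factorial)^t
      = (t*(r-1)).factorial := by
  have h1 : ∏ j ∈ Finset.range t, ((t-j)*(r-1)).choose (r-1)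
      = ∏ j ∈ Finset.range t, ((j+1)*(r-1)).choose (r-1) := by
    rw [← prod_range_reflect (fun j => ((j+1)*(r-1)).choose (r-1)) t]
    refine Finset.prod_congr rfl fun j hj => ?_
    rw [mem_range] at hj
    congr 2
    omega
  rw [h1]
  exact prod_choose_aux hr t

/-- The number of `r`-uniform hypertrees on the labelled vertex set `[n]`,
where `r-1` divides `n-1` and `t = (n-1)/(r-1)`, equals
`(n-1)! · n^(t-1) / (t! · ((r-1)!)^t)` (stated multiplied out). -/
theorem count_uniform_hypertrees {n r t : ℕ} (hn : 2 ≤ n) (hr : 2 ≤ r)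
    (hdvd : (r - 1) ∣ (n - 1)) (ht : t = (n - 1) / (r - 1)) :
    Nat.card {E : Finset (Finset (Fin n)) // IsHypertree E ∧ UniformR r E} *
      (t.factorial * ((r - 1).factorial) ^ t) =
    (n - 1).factorial * n ^ (t - 1) := by
  have hnt : n - 1 = t * (r - 1) := by
    rw [ht, Nat.div_mul_cancel hdvd]
  have ht1 : 1 ≤ t := by
    rcases Nat.eq_zero_or_pos t with rfl | h
    · simp at hnt; omega
    · exact h
  have hmain := card_prod (V := Fin n) hr t
  rw [rf_top_card hn hr hnt] at hmain
  simp only [Fintype.card_fin] at hmain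
  have hterm : ∀ j ∈ Finset.range t,
      n * (n - j*(r-1) - 1).choose (r-1) = n * ((t-j)*(r-1)).choose (r-1) := by
    intro j hj
    rw [mem_range] at hj
    congr 2
    have h1 : (t-j)*(r-1) = t*(r-1) - j*(r-1) := by rw [Nat.sub_mul]
    have h2 : j*(r-1) ≤ t*(r-1) := Nat.mul_le_mul_right _ (by omega)
    omega
  rw [Finset.prod_congr rfl hterm, Finset.prod_mul_distrib, Finset.prod_const,
    Finset.card_range] at hmain
  -- hmain : N * n * t! = n^t * ∏_{j<t} C((t-j)(r-1), r-1)
  apply Nat.eq_of_mul_eq_mul_right (show 0 < n by omega)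
  have hpow : n ^ (t-1) * n = n ^ t := by
    rw [← pow_succ]
    congr 1
    omega
  calc Nat.card {E : Finset (Finset (Fin n)) // IsHypertree E ∧ UniformR r E} *
        (t.factorial * ((r - 1).factorial) ^ t) * n
      = (Nat.card {E : Finset (Finset (Fin n)) // IsHypertree E ∧ UniformR r E} * n *
          t.factorial) * ((r - 1).factorial) ^ t := by ring
    _ = (n ^ t * ∏ j ∈ Finset.range t, ((t-j)*(r-1)).choose (r-1)) *
          ((r - 1).factorial) ^ t := by rw [hmain]
    _ = n ^ t * ((∏ j ∈ Finset.range t, ((t-j)*(r-1)).choose (r-1)) *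
          ((r - 1).factorial) ^ t) := by ring
    _ = n ^ t * (t*(r-1)).factorial := by rw [prod_choose hr t]
    _ = n ^ t * (n-1).factorial := by rw [← hnt]
    _ = (n - 1).factorial * n ^ (t - 1) * n := by rw [← hpow]; ring

end Forest
end HypertreeCount
end

section
/- Let N, s be positive integers with s ≤ N, and let h be a real-valued function on the s-subsets of [N] such that |h(A) - h(A')| ≤ α whenever A and A' share exactly s-1 elements. If C is a uniformly random s-subset of [N], then E[exp(h(C))] = exp(E[h(C)] + K) for some real K with 0 ≤ K ≤ (1/8)·min{s, N-s}·α². -/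
open Finset



lemma hoeff_core (p : ℝ) (hp0 : 0 ≤ p) (hp1 : p ≤ 1) {u : ℝ} (hu : 0 ≤ u) :
    Real.log (1 - p + p * Real.exp u) ≤ p * u + u ^ 2 / 8 := by
  set D : ℝ → ℝ := fun v => 1 - p + p * Real.exp v with hD
  have hDpos : ∀ v ∈ Set.Ici (0:ℝ), 0 < D v := by
    intro v hv
    have : (1:ℝ) ≤ Real.exp v := Real.one_le_exp hv
    simp only [hD]
    nlinarith [Real.exp_pos v]
  -- derivative facts
  have hDderiv : ∀ v : ℝ, HasDerivAt D (p * Real.exp v) v := by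
    intro v
    exact ((Real.hasDerivAt_exp v).const_mul p).const_add (1 - p)
  set G : ℝ → ℝ := fun v => p + v / 4 - p * Real.exp v / D v with hG
  set F : ℝ → ℝ := fun v => p * v + v ^ 2 / 8 - Real.log (D v) with hF
  have hGderiv : ∀ v ∈ Set.Ici (0:ℝ), HasDerivAt G
      (1 / 4 - (p * Real.exp v * D v - p * Real.exp v * (p * Real.exp v)) / (D v) ^ 2) v := by
    intro v hv
    have h1 : HasDerivAt (fun w => p * Real.exp w) (p * Real.exp v) v :=
      (Real.hasDerivAt_exp v).const_mul p
    have h2 : HasDerivAt (fun w => p * Real.exp w / D w)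
        ((p * Real.exp v * D v - p * Real.exp v * (p * Real.exp v)) / (D v) ^ 2) v := by
      exact h1.div (hDderiv v) (ne_of_gt (hDpos v hv))
    have h3 : HasDerivAt (fun w => p + w / 4) (1 / 4) v := by
      simpa using ((hasDerivAt_id v).div_const 4).const_add p
    exact h3.sub h2
  have hFderiv : ∀ v ∈ Set.Ici (0:ℝ), HasDerivAt F (G v) v := by
    intro v hv
    have h1 : HasDerivAt (fun w => Real.log (D w)) (p * Real.exp v / D v) v :=
      (hDderiv v).log (ne_of_gt (hDpos v hv))
    have h2' : HasDerivAt (fun w => w ^ 2 / 8) (2 * v / 8) v := by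
      simpa [pow_one] using (hasDerivAt_pow 2 v).div_const 8
    have h3 : HasDerivAt (fun w => p * w) p v := by simpa using (hasDerivAt_id v).const_mul p
    have := (h3.add h2').sub h1
    simp only [hG, hF]
    refine this.congr_deriv ?_
    ring
  have hGmono : MonotoneOn G (Set.Ici (0:ℝ)) := by
    apply monotoneOn_of_hasDerivWithinAt_nonneg (convex_Ici 0)
    · intro v hv
      exact ((hGderiv v hv).continuousAt).continuousWithinAt
    · intro v hv
      rw [interior_Ici] at hv
      exact (hGderiv v (Set.mem_Ici.2 (le_of_lt (Set.mem_Ioi.1 hv)))).hasDerivWithinAt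
    · intro v hv
      rw [interior_Ici] at hv
      have hD' := hDpos v (Set.mem_Ici.2 (le_of_lt (Set.mem_Ioi.1 hv)))
      have hpe : 0 ≤ p * Real.exp v := mul_nonneg hp0 (Real.exp_pos v).le
      have hle : p * Real.exp v ≤ D v := by
        simp only [hD]; nlinarith [Real.one_le_exp (le_of_lt hv)]
      have key : (p * Real.exp v * D v - p * Real.exp v * (p * Real.exp v)) / (D v) ^ 2
          ≤ 1 / 4 := by
        rw [div_le_iff₀ (by positivity)]
        have hsq := sq_nonneg (D v - 2 * (p * Real.exp v))
        generalize D v = d at *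
        generalize p * Real.exp v = x at *
        nlinarith [hsq]
      linarith
  have hG0 : G 0 = 0 := by
    simp only [hG, hD, Real.exp_zero, mul_one]
    field_simp
    ring
  have hGnonneg : ∀ v ∈ Set.Ici (0:ℝ), 0 ≤ G v := by
    intro v hv
    have := hGmono (Set.self_mem_Ici) hv hv
    rw [hG0] at this; exact this
  have hFmono : MonotoneOn F (Set.Ici (0:ℝ)) := by
    apply monotoneOn_of_hasDerivWithinAt_nonneg (convex_Ici 0)
    · intro v hv
      exact ((hFderiv v hv).continuousAt).continuousWithinAt
    · intro v hv
      rw [interior_Ici] at hv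
      exact (hFderiv v (Set.mem_Ici.2 (le_of_lt (Set.mem_Ioi.1 hv)))).hasDerivWithinAt
    · intro v hv
      rw [interior_Ici] at hv
      exact hGnonneg v (Set.mem_Ici.2 (le_of_lt (Set.mem_Ioi.1 hv)))
  have hF0 : F 0 = 0 := by
    simp [hF, hD]
  have := hFmono (Set.self_mem_Ici) hu hu
  rw [hF0] at this
  simp only [hF] at this
  linarith

lemma sum_exp_le {ι : Type*} [DecidableEq ι] (t : Finset ι) (ht : t.Nonempty)
    (f : ι → ℝ) (α : ℝ) (hα : 0 ≤ α)
    (hf : ∀ x ∈ t, ∀ y ∈ t, |f x - f y| ≤ α) :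
    ∑ x ∈ t, Real.exp (f x)
      ≤ t.card * Real.exp ((∑ x ∈ t, f x) / t.card + α ^ 2 / 8) := by
  classical
  obtain ⟨x₀, hx₀, hmin⟩ := t.exists_min_image f ht
  set m : ℝ := f x₀ with hm
  have hbound : ∀ x ∈ t, m ≤ f x ∧ f x ≤ m + α := by
    intro x hx
    refine ⟨hmin x hx, ?_⟩
    have := hf x hx x₀ hx₀
    rw [abs_le] at this
    linarith [this.2]
  have hcard : (0:ℝ) < t.card := by exact_mod_cast card_pos.2 ht
  rcases eq_or_lt_of_le hα with hα0 | hαpos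
  · -- α = 0 : all values equal m
    have heq : ∀ x ∈ t, f x = m := by
      intro x hx
      have := hbound x hx
      rw [← hα0] at this
      linarith [this.1, this.2]
    rw [Finset.sum_congr rfl (fun x hx => by rw [heq x hx]),
        Finset.sum_congr rfl (fun x hx => heq x hx)]
    simp only [Finset.sum_const, nsmul_eq_mul, ← hα0]
    rw [mul_comm ((t.card:ℝ)) m, mul_div_assoc, div_self (ne_of_gt hcard)]
    norm_num
  · -- α > 0
    set n : ℝ := (t.card : ℝ) with hn
    set S : ℝ := ∑ x ∈ t, f x with hS
    set p : ℝ := (S - n * m) / (n * α) with hp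
    have hθ : ∀ x ∈ t, 0 ≤ (f x - m) / α ∧ (f x - m) / α ≤ 1 := by
      intro x hx
      obtain ⟨h1, h2⟩ := hbound x hx
      exact ⟨div_nonneg (by linarith) hαpos.le, by rw [div_le_one hαpos]; linarith⟩
    have hconv : ∀ x ∈ t, Real.exp (f x)
        ≤ Real.exp m * ((1 - (f x - m) / α) + ((f x - m) / α) * Real.exp α) := by
      intro x hx
      obtain ⟨h1, h2⟩ := hθ x hx
      have := convexOn_exp.2 (Set.mem_univ (0:ℝ)) (Set.mem_univ α)
        (by linarith : (0:ℝ) ≤ 1 - (f x - m) / α) h1 (by ring)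
      simp only [smul_eq_mul, mul_zero, zero_add, Real.exp_zero, mul_one] at this
      have harg : (f x - m) / α * α = f x - m := by field_simp
      rw [harg] at this
      calc Real.exp (f x) = Real.exp m * Real.exp (f x - m) := by
            rw [← Real.exp_add]; ring_nf
        _ ≤ Real.exp m * ((1 - (f x - m) / α) + ((f x - m) / α) * Real.exp α) := by
            apply mul_le_mul_of_nonneg_left _ (Real.exp_pos m).le
            linarith
    have hsum : ∑ x ∈ t, Real.exp (f x)
        ≤ Real.exp m * (n * (1 - p + p * Real.exp α)) := by
      calc ∑ x ∈ t, Real.exp (f x)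
          ≤ ∑ x ∈ t, Real.exp m * ((1 - (f x - m) / α) + ((f x - m) / α) * Real.exp α) :=
            Finset.sum_le_sum hconv
        _ = Real.exp m * (n * (1 - p + p * Real.exp α)) := by
            rw [← Finset.mul_sum]
            congr 1
            have hΘ : ∑ x ∈ t, (f x - m) / α = p * n := by
              rw [hp, ← Finset.sum_div, Finset.sum_sub_distrib, Finset.sum_const, nsmul_eq_mul,
                ← hS, ← hn]
              field_simp
            rw [Finset.sum_add_distrib, Finset.sum_sub_distrib, Finset.sum_const, nsmul_eq_mul,
              mul_one, ← Finset.sum_mul, hΘ, ← hn]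
            ring
    have hp0 : 0 ≤ p := by
      rw [hp]
      apply div_nonneg _ (by positivity)
      have : n * m = ∑ _x ∈ t, m := by rw [Finset.sum_const, nsmul_eq_mul, hn]
      rw [this, hS, ← Finset.sum_sub_distrib]
      exact Finset.sum_nonneg fun x hx => by linarith [(hbound x hx).1]
    have hp1 : p ≤ 1 := by
      rw [hp, div_le_one (by positivity)]
      have : ∑ x ∈ t, (f x - m) ≤ ∑ _x ∈ t, α :=
        Finset.sum_le_sum fun x hx => by linarith [(hbound x hx).2]
      simp only [Finset.sum_sub_distrib, Finset.sum_const, nsmul_eq_mul] at this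
      rw [hS, hn]
      linarith [this]
    have hkey := hoeff_core p hp0 hp1 hα
    have hDpos : (0:ℝ) < 1 - p + p * Real.exp α := by
      nlinarith [Real.exp_pos α, Real.one_le_exp hα]
    have hexp : 1 - p + p * Real.exp α ≤ Real.exp (p * α + α ^ 2 / 8) := by
      rw [← Real.exp_log hDpos]
      exact Real.exp_le_exp.2 hkey
    have hmean : m + p * α = S / n := by
      rw [hp]; field_simp; ring
    calc ∑ x ∈ t, Real.exp (f x)
        ≤ Real.exp m * (n * (1 - p + p * Real.exp α)) := hsum
      _ ≤ Real.exp m * (n * Real.exp (p * α + α ^ 2 / 8)) := by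
          apply mul_le_mul_of_nonneg_left _ (Real.exp_pos m).le
          exact mul_le_mul_of_nonneg_left hexp hcard.le
      _ = n * Real.exp (S / n + α ^ 2 / 8) := by
          have h1 : S / n + α ^ 2 / 8 = m + (p * α + α ^ 2 / 8) := by rw [← hmean]; ring
          rw [h1, show Real.exp (m + (p * α + α ^ 2 / 8))
            = Real.exp m * Real.exp (p * α + α ^ 2 / 8) from Real.exp_add m _]
          ring

lemma sum_insert_eq (N s : ℕ) (F : Finset (Fin N) → ℝ) :
    ∑ B ∈ powersetCard s (univ : Finset (Fin N)), ∑ x ∈ univ \ B, F (insert x B)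
      = ((s:ℝ) + 1) * ∑ A ∈ powersetCard (s+1) (univ : Finset (Fin N)), F A := by
  classical
  calc ∑ B ∈ powersetCard s (univ : Finset (Fin N)), ∑ x ∈ univ \ B, F (insert x B)
      = ∑ q ∈ (powersetCard s (univ : Finset (Fin N))).sigma (fun B => univ \ B),
          F (insert q.2 q.1) := (Finset.sum_sigma (powersetCard s (univ : Finset (Fin N)))
          (fun B => univ \ B) (fun q => F (insert q.2 q.1))).symm
    _ = ∑ q ∈ (powersetCard (s+1) (univ : Finset (Fin N))).sigma (fun A => A), F q.1 := by
        refine Finset.sum_nbij' (fun q => ⟨insert q.2 q.1, q.2⟩)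
          (fun q => ⟨q.1.erase q.2, q.2⟩) ?_ ?_ ?_ ?_ ?_
        · rintro ⟨B, x⟩ hq
          rw [Finset.mem_sigma] at hq
          obtain ⟨hB, hx⟩ := hq
          rw [Finset.mem_sdiff] at hx
          rw [Finset.mem_sigma]
          refine ⟨mem_powersetCard.2 ⟨subset_univ _, ?_⟩, mem_insert_self _ _⟩
          rw [card_insert_of_notMem hx.2, (mem_powersetCard.1 hB).2]
        · rintro ⟨A, a⟩ hq
          rw [Finset.mem_sigma] at hq
          obtain ⟨hA, ha⟩ := hq
          rw [Finset.mem_sigma]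
          constructor
          · refine mem_powersetCard.2 ⟨subset_univ _, ?_⟩
            rw [card_erase_of_mem ha, (mem_powersetCard.1 hA).2]
            omega
          · rw [Finset.mem_sdiff]
            exact ⟨mem_univ _, notMem_erase _ _⟩
        · rintro ⟨B, x⟩ hq
          rw [Finset.mem_sigma] at hq
          obtain ⟨hB, hx⟩ := hq
          rw [Finset.mem_sdiff] at hx
          simp [Finset.erase_insert hx.2]
        · rintro ⟨A, a⟩ hq
          rw [Finset.mem_sigma] at hq
          simp [Finset.insert_erase hq.2]
        · rintro ⟨B, x⟩ _
          rfl
    _ = ∑ A ∈ powersetCard (s+1) (univ : Finset (Fin N)), ((s:ℝ)+1) * F A := by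
        rw [Finset.sum_sigma]
        refine Finset.sum_congr rfl fun A hA => ?_
        have : ∑ x ∈ A, F (⟨A, x⟩ : (_ : Finset (Fin N)) × Fin N).fst = ∑ _x ∈ A, F A := rfl
        rw [this, Finset.sum_const, (mem_powersetCard.1 hA).2, nsmul_eq_mul]
        push_cast
        ring
    _ = ((s:ℝ) + 1) * ∑ A ∈ powersetCard (s+1) (univ : Finset (Fin N)), F A := by
        rw [Finset.mul_sum]

lemma main_ind (N : ℕ) (α : ℝ) (hα : 0 ≤ α) (s : ℕ) :
    s ≤ N → ∀ h : Finset (Fin N) → ℝ,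
      (∀ A ∈ powersetCard s (univ : Finset (Fin N)),
        ∀ A' ∈ powersetCard s (univ : Finset (Fin N)),
          (A ∩ A').card = s - 1 → |h A - h A'| ≤ α) →
      ∑ A ∈ powersetCard s (univ : Finset (Fin N)), Real.exp (h A)
        ≤ (N.choose s) * Real.exp
            ((∑ A ∈ powersetCard s (univ : Finset (Fin N)), h A) / (N.choose s)
              + (s : ℝ) * α ^ 2 / 8) := by
  classical
  induction s with
  | zero =>
    intro _ h _
    simp [powersetCard_zero]
  | succ s ih =>
    intro hsN h hlip
    have hsN' : s ≤ N := le_of_lt (Nat.lt_of_succ_le hsN)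
    have hNs : 1 ≤ N - s := by omega
    have hNs' : (0:ℝ) < ((N - s : ℕ) : ℝ) := by exact_mod_cast hNs
    set P := powersetCard s (univ : Finset (Fin N)) with hP
    set Q := powersetCard (s+1) (univ : Finset (Fin N)) with hQ
    have hcardB : ∀ B ∈ P, B.card = s := fun B hB => (mem_powersetCard.1 hB).2
    have hsdiff : ∀ B ∈ P, (univ \ B).card = N - s := by
      intro B hB
      rw [card_sdiff_of_subset (subset_univ B), card_univ, Fintype.card_fin, hcardB B hB]
    set g : Finset (Fin N) → ℝ :=
      fun B => (∑ x ∈ univ \ B, h (insert x B)) / ((N - s : ℕ) : ℝ) with hg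
    have hins : ∀ B ∈ P, ∀ x ∈ univ \ B, insert x B ∈ Q := by
      intro B hB x hx
      refine mem_powersetCard.2 ⟨subset_univ _, ?_⟩
      rw [card_insert_of_notMem (mem_sdiff.1 hx).2, hcardB B hB]
    -- conditional Hoeffding bound
    have hcond : ∀ B ∈ P, ∑ x ∈ univ \ B, Real.exp (h (insert x B))
        ≤ ((N - s : ℕ) : ℝ) * Real.exp (g B + α ^ 2 / 8) := by
      intro B hB
      have hne : (univ \ B).Nonempty := by
        rw [← Finset.card_pos, hsdiff B hB]; omega
      have hlip' : ∀ x ∈ univ \ B, ∀ y ∈ univ \ B,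
          |h (insert x B) - h (insert y B)| ≤ α := by
        intro x hx y hy
        by_cases hxy : x = y
        · simp [hxy, hα]
        · apply hlip _ (hins B hB x hx) _ (hins B hB y hy)
          have hxB : x ∉ B := (mem_sdiff.1 hx).2
          have hyB : y ∉ B := (mem_sdiff.1 hy).2
          have hBB : insert x B ∩ insert y B = B := by
            ext a
            simp only [mem_inter, mem_insert]
            constructor
            · rintro ⟨rfl | ha, rfl | ha'⟩ <;> first | rfl | assumption | exact absurd rfl hxy
            · intro ha; exact ⟨Or.inr ha, Or.inr ha⟩
          rw [hBB, hcardB B hB]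
          omega
      have := sum_exp_le (univ \ B) hne (fun x => h (insert x B)) α hα hlip'
      rw [hsdiff B hB] at this
      exact this
    -- g is Lipschitz
    have hgLip : ∀ B ∈ P, ∀ B' ∈ P, (B ∩ B').card = s - 1 → |g B - g B'| ≤ α := by
      intro B hB B' hB' hint
      rcases eq_or_ne B B' with rfl | hne
      · simp [hα]
      · have hs1 : 1 ≤ s := by
          rcases Nat.eq_zero_or_pos s with h0 | h1
          · exfalso
            apply hne
            have e1 := hcardB B hB
            have e2 := hcardB B' hB'
            rw [h0, Finset.card_eq_zero] at e1 e2
            rw [e1, e2]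
          · exact h1
        have hcB := hcardB B hB
        have hcB' := hcardB B' hB'
        have hbd : (B \ B').card = 1 := by
          have := Finset.card_sdiff_add_card_inter B B'
          omega
        have hbd' : (B' \ B).card = 1 := by
          have := Finset.card_sdiff_add_card_inter B' B
          rw [Finset.inter_comm] at this
          omega
        obtain ⟨b, hb⟩ := Finset.card_eq_one.1 hbd
        obtain ⟨b', hb'⟩ := Finset.card_eq_one.1 hbd'
        have hbB : b ∈ B ∧ b ∉ B' := by
          have : b ∈ B \ B' := by rw [hb]; exact mem_singleton_self b
          exact ⟨(mem_sdiff.1 this).1, (mem_sdiff.1 this).2⟩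
        have hb'B : b' ∈ B' ∧ b' ∉ B := by
          have : b' ∈ B' \ B := by rw [hb']; exact mem_singleton_self b'
          exact ⟨(mem_sdiff.1 this).1, (mem_sdiff.1 this).2⟩
        have hswap : insert b' B = insert b B' := by
          rw [Finset.insert_eq, Finset.insert_eq, ← hb', ← hb,
            Finset.sdiff_union_self_eq_union, Finset.sdiff_union_self_eq_union,
            Finset.union_comm]
        set σ : Fin N → Fin N := fun x => if x = b' then b else x with hσ
        have hσmem : ∀ x ∈ univ \ B, σ x ∈ univ \ B' := by
          intro x hx
          have hxB : x ∉ B := (mem_sdiff.1 hx).2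
          rw [mem_sdiff]
          refine ⟨mem_univ _, ?_⟩
          by_cases hxb' : x = b'
          · simp only [hσ, hxb', if_pos rfl]
            exact hbB.2
          · simp only [hσ, if_neg hxb']
            intro hxB'
            have : x ∈ B' \ B := mem_sdiff.2 ⟨hxB', hxB⟩
            rw [hb', mem_singleton] at this
            exact hxb' this
        have hsum' : ∑ y ∈ univ \ B', h (insert y B')
            = ∑ x ∈ univ \ B, h (insert (σ x) B') := by
          refine Finset.sum_nbij' (fun y => if y = b then b' else y) σ ?_ ?_ ?_ ?_ ?_
          · intro y hy
            have hyB' : y ∉ B' := (mem_sdiff.1 hy).2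
            rw [mem_sdiff]
            refine ⟨mem_univ _, ?_⟩
            by_cases hyb : y = b
            · simp only [if_pos hyb]
              exact hb'B.2
            · simp only [if_neg hyb]
              intro hyB
              have : y ∈ B \ B' := mem_sdiff.2 ⟨hyB, hyB'⟩
              rw [hb, mem_singleton] at this
              exact hyb this
          · exact hσmem
          · intro y hy
            have hyB' : y ∉ B' := (mem_sdiff.1 hy).2
            have hyb' : y ≠ b' := fun e => hyB' (e ▸ hb'B.1)
            by_cases hyb : y = b
            · simp [hσ, hyb]
            · simp [hσ, if_neg hyb, if_neg hyb']
          · intro x hx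
            have hxB : x ∉ B := (mem_sdiff.1 hx).2
            have hxb : x ≠ b := fun e => hxB (e ▸ hbB.1)
            by_cases hxb' : x = b'
            · simp [hσ, hxb']
            · simp [hσ, if_neg hxb', if_neg hxb]
          · intro y hy
            have hyB' : y ∉ B' := (mem_sdiff.1 hy).2
            have hyb' : y ≠ b' := fun e => hyB' (e ▸ hb'B.1)
            by_cases hyb : y = b
            · simp [hσ, hyb]
            · simp [hσ, if_neg hyb, if_neg hyb']
        have hdiff : ∀ x ∈ univ \ B, |h (insert x B) - h (insert (σ x) B')| ≤ α := by
          intro x hx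
          have hxB : x ∉ B := (mem_sdiff.1 hx).2
          by_cases hxb' : x = b'
          · have hσx : σ x = b := by simp [hσ, hxb']
            rw [hσx, hxb', hswap, sub_self, abs_zero]
            exact hα
          · have hσx : σ x = x := by simp [hσ, if_neg hxb']
            rw [hσx]
            have hxB' : x ∉ B' := by
              intro hxB'
              have : x ∈ B' \ B := mem_sdiff.2 ⟨hxB', hxB⟩
              rw [hb', mem_singleton] at this
              exact hxb' this
            apply hlip _ (hins B hB x hx) _ (hins B' hB' x (mem_sdiff.2 ⟨mem_univ _, hxB'⟩))
            have hBB : insert x B ∩ insert x B' = insert x (B ∩ B') := by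
              ext a
              simp only [mem_inter, mem_insert]
              tauto
            rw [hBB, card_insert_of_notMem (fun hc => hxB (mem_inter.1 hc).1), hint]
            omega
        have hgdiff : g B - g B'
            = (∑ x ∈ univ \ B, (h (insert x B) - h (insert (σ x) B'))) / ((N - s : ℕ) : ℝ) := by
          rw [Finset.sum_sub_distrib, hg, ← hsum', sub_div]
        rw [hgdiff, abs_div, abs_of_pos hNs', div_le_iff₀ hNs']
        calc |∑ x ∈ univ \ B, (h (insert x B) - h (insert (σ x) B'))|
            ≤ ∑ x ∈ univ \ B, |h (insert x B) - h (insert (σ x) B')| :=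
              Finset.abs_sum_le_sum_abs _ _
          _ ≤ ∑ _x ∈ univ \ B, α := Finset.sum_le_sum hdiff
          _ = α * ((N - s : ℕ) : ℝ) := by
              rw [Finset.sum_const, hsdiff B hB, nsmul_eq_mul]; ring
    -- assemble
    have hih := ih hsN' g hgLip
    set c : ℝ := (N.choose s : ℝ) with hc
    set c' : ℝ := (N.choose (s+1) : ℝ) with hc'
    set ns : ℝ := ((N - s : ℕ) : ℝ) with hns
    have hcpos : 0 < c := by rw [hc]; exact_mod_cast Nat.choose_pos hsN'
    have hc'pos : 0 < c' := by rw [hc']; exact_mod_cast Nat.choose_pos hsN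
    have hchoose : ns * c = ((s:ℝ) + 1) * c' := by
      have h1 := Nat.choose_succ_right_eq N s
      have h2 : ((N.choose (s+1) : ℕ) : ℝ) * ((s:ℝ)+1)
          = ((N.choose s : ℕ) : ℝ) * ((N - s : ℕ) : ℝ) := by
        exact_mod_cast congrArg (fun k : ℕ => (k : ℝ)) h1
      rw [hns, hc, hc']
      linarith
    have hgsum : ∑ B ∈ P, g B = (((s:ℝ)+1) * ∑ A ∈ Q, h A) / ns := by
      simp only [hg]
      rw [← Finset.sum_div, hP]
      rw [sum_insert_eq N s h, ← hQ]
    have hSe : ((s:ℝ)+1) * ∑ A ∈ Q, Real.exp (h A)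
        = ∑ B ∈ P, ∑ x ∈ univ \ B, Real.exp (h (insert x B)) := by
      rw [hP, hQ]
      exact (sum_insert_eq N s _).symm
    have hmean : (∑ B ∈ P, g B) / c = (∑ A ∈ Q, h A) / c' := by
      rw [hgsum]
      field_simp
      linear_combination (-(∑ A ∈ Q, h A)) * hchoose
    have hmain : ((s:ℝ)+1) * ∑ A ∈ Q, Real.exp (h A)
        ≤ ((s:ℝ)+1) * (c' * Real.exp ((∑ A ∈ Q, h A) / c' + ((s:ℝ)+1) * α ^ 2 / 8)) := by
      calc ((s:ℝ)+1) * ∑ A ∈ Q, Real.exp (h A)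
          = ∑ B ∈ P, ∑ x ∈ univ \ B, Real.exp (h (insert x B)) := hSe
        _ ≤ ∑ B ∈ P, ns * Real.exp (g B + α ^ 2 / 8) := Finset.sum_le_sum hcond
        _ = ns * Real.exp (α ^ 2 / 8) * ∑ B ∈ P, Real.exp (g B) := by
            rw [Finset.mul_sum]
            refine Finset.sum_congr rfl fun B _ => ?_
            rw [Real.exp_add]
            ring
        _ ≤ ns * Real.exp (α ^ 2 / 8)
              * (c * Real.exp ((∑ B ∈ P, g B) / c + (s:ℝ) * α ^ 2 / 8)) := by
            apply mul_le_mul_of_nonneg_left hih (by positivity)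
        _ = ((s:ℝ)+1) * (c' * Real.exp ((∑ A ∈ Q, h A) / c' + ((s:ℝ)+1) * α ^ 2 / 8)) := by
            rw [hmean]
            have e1 : Real.exp (α ^ 2 / 8 + ((∑ A ∈ Q, h A) / c' + (s:ℝ) * α ^ 2 / 8))
                = Real.exp (α ^ 2 / 8) * Real.exp ((∑ A ∈ Q, h A) / c' + (s:ℝ) * α ^ 2 / 8) :=
              Real.exp_add _ _
            rw [show (∑ A ∈ Q, h A) / c' + ((s:ℝ)+1) * α ^ 2 / 8
                = α ^ 2 / 8 + ((∑ A ∈ Q, h A) / c' + (s:ℝ) * α ^ 2 / 8) by ring, e1]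
            linear_combination Real.exp (α ^ 2 / 8)
              * Real.exp ((∑ A ∈ Q, h A) / c' + (s:ℝ) * α ^ 2 / 8) * hchoose
    have hfinal := (mul_le_mul_iff_right₀ (by positivity : (0:ℝ) < (s:ℝ)+1)).1 hmain
    push_cast
    exact hfinal

lemma compl_sum (N s : ℕ) (hsN : s ≤ N) (F : Finset (Fin N) → ℝ) :
    ∑ A ∈ powersetCard (N - s) (univ : Finset (Fin N)), F Aᶜ
      = ∑ A ∈ powersetCard s (univ : Finset (Fin N)), F A := by
  classical
  refine Finset.sum_nbij' (fun A => Aᶜ) (fun A => Aᶜ) ?_ ?_ ?_ ?_ ?_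
  · intro A hA
    refine mem_powersetCard.2 ⟨subset_univ _, ?_⟩
    rw [Finset.card_compl, (mem_powersetCard.1 hA).2, Fintype.card_fin]
    omega
  · intro A hA
    refine mem_powersetCard.2 ⟨subset_univ _, ?_⟩
    rw [Finset.card_compl, (mem_powersetCard.1 hA).2, Fintype.card_fin]
  · intro A _; exact compl_compl A
  · intro A _; exact compl_compl A
  · intro A _; rfl

/-- If `h` on `s`-subsets of `[N]` changes by at most `α` under single-element
swaps and `C` is a uniformly random `s`-subset, then
`E[exp h(C)] = exp(E[h(C)] + K)` for some `0 ≤ K ≤ (1/8) min{s, N-s} α²`. -/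
theorem exp_moment_of_lipschitz (N s : ℕ) (hs : 1 ≤ s) (hsN : s ≤ N)
    (α : ℝ) (hα : 0 ≤ α) (h : Finset (Fin N) → ℝ)
    (hlip : ∀ A ∈ powersetCard s (univ : Finset (Fin N)),
      ∀ A' ∈ powersetCard s (univ : Finset (Fin N)),
        (A ∩ A').card = s - 1 → |h A - h A'| ≤ α) :
    ∃ K : ℝ, 0 ≤ K ∧ K ≤ (1 / 8) * (min s (N - s)) * α ^ 2 ∧
      (∑ A ∈ powersetCard s (univ : Finset (Fin N)), Real.exp (h A))
          / (N.choose s)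
        = Real.exp ((∑ A ∈ powersetCard s (univ : Finset (Fin N)), h A)
            / (N.choose s) + K) := by

  classical
  set P := powersetCard s (univ : Finset (Fin N)) with hP
  set n : ℝ := (N.choose s : ℝ) with hn
  have hnpos : (0:ℝ) < n := by rw [hn]; exact_mod_cast Nat.choose_pos hsN
  have hPne : P.Nonempty := by
    rw [hP]
    rw [Finset.powersetCard_nonempty]
    rw [card_univ, Fintype.card_fin]
    exact hsN
  set Se : ℝ := ∑ A ∈ P, Real.exp (h A) with hSe
  set S : ℝ := ∑ A ∈ P, h A with hS
  have hSepos : 0 < Se := Finset.sum_pos (fun A _ => Real.exp_pos _) hPne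
  set μ : ℝ := S / n with hμ
  set K : ℝ := Real.log (Se / n) - μ with hK
  have heq : Se / n = Real.exp (μ + K) := by
    rw [hK, show μ + (Real.log (Se / n) - μ) = Real.log (Se / n) by ring,
      Real.exp_log (by positivity)]
  -- Jensen lower bound
  have hjensen : n * Real.exp μ ≤ Se := by
    have hbd : ∀ A ∈ P, Real.exp μ * (1 + (h A - μ)) ≤ Real.exp (h A) := by
      intro A _
      calc Real.exp μ * (1 + (h A - μ)) ≤ Real.exp μ * Real.exp (h A - μ) := by
            have := Real.add_one_le_exp (h A - μ)
            nlinarith [Real.exp_pos μ]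
        _ = Real.exp (h A) := by rw [← Real.exp_add]; ring_nf
    have hsum := Finset.sum_le_sum hbd
    have hcardP : (P.card : ℝ) = n := by
      rw [hP, Finset.card_powersetCard, card_univ, Fintype.card_fin, hn]
    have hlhs : ∑ A ∈ P, Real.exp μ * (1 + (h A - μ)) = n * Real.exp μ := by
      rw [← Finset.mul_sum]
      have : ∑ A ∈ P, (1 + (h A - μ)) = n + (S - n * μ) := by
        rw [Finset.sum_add_distrib, Finset.sum_sub_distrib, Finset.sum_const, Finset.sum_const,
          nsmul_eq_mul, nsmul_eq_mul, mul_one, hcardP, ← hS]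
      rw [this, hμ]
      field_simp
      ring
    rw [hlhs] at hsum
    exact hsum
  have hK0 : 0 ≤ K := by
    have h1 : Real.exp μ ≤ Se / n := by
      rw [le_div_iff₀ hnpos, mul_comm]
      exact hjensen
    rw [heq] at h1
    have := Real.exp_le_exp.1 h1
    linarith
  have hKs : K ≤ (s : ℝ) * α ^ 2 / 8 := by
    have hmain := main_ind N α hα s hsN h hlip
    rw [← hP, ← hSe, ← hS, ← hn] at hmain
    have h1 : Se / n ≤ Real.exp (μ + (s:ℝ) * α ^ 2 / 8) := by
      rw [div_le_iff₀ hnpos, hμ]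
      rw [mul_comm]
      exact hmain
    rw [heq] at h1
    have := Real.exp_le_exp.1 h1
    linarith
  have hKns : K ≤ ((N - s : ℕ) : ℝ) * α ^ 2 / 8 := by
    have hlip' : ∀ A ∈ powersetCard (N - s) (univ : Finset (Fin N)),
        ∀ A' ∈ powersetCard (N - s) (univ : Finset (Fin N)),
          (A ∩ A').card = (N - s) - 1 → |h Aᶜ - h A'ᶜ| ≤ α := by
      intro A hA A' hA' hint
      rcases eq_or_ne A A' with rfl | hne
      · simp [hα]
      · have hcA : A.card = N - s := (mem_powersetCard.1 hA).2
        have hcA' : A'.card = N - s := (mem_powersetCard.1 hA').2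
        have hNs1 : 1 ≤ N - s := by
          by_contra hc
          push_neg at hc
          apply hne
          have e1 : A.card = 0 := by omega
          have e2 : A'.card = 0 := by omega
          rw [Finset.card_eq_zero] at e1 e2
          rw [e1, e2]
        apply hlip
        · refine mem_powersetCard.2 ⟨subset_univ _, ?_⟩
          rw [Finset.card_compl, hcA, Fintype.card_fin]
          omega
        · refine mem_powersetCard.2 ⟨subset_univ _, ?_⟩
          rw [Finset.card_compl, hcA', Fintype.card_fin]
          omega
        · have hcup : (A ∪ A').card = N - s + 1 := by
            have := Finset.card_union_add_card_inter A A'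
            omega
          have : Aᶜ ∩ A'ᶜ = (A ∪ A')ᶜ := (Finset.compl_union A A').symm
          rw [this, Finset.card_compl, hcup, Fintype.card_fin]
          omega
    have hmain := main_ind N α hα (N - s) (Nat.sub_le N s) (fun A => h Aᶜ) hlip'
    rw [compl_sum N s hsN (fun A => Real.exp (h A)),
      compl_sum N s hsN h, Nat.choose_symm hsN, ← hP, ← hSe, ← hS, ← hn] at hmain
    have h1 : Se / n ≤ Real.exp (μ + ((N - s : ℕ):ℝ) * α ^ 2 / 8) := by
      rw [div_le_iff₀ hnpos, hμ, mul_comm]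
      exact hmain
    rw [heq] at h1
    have := Real.exp_le_exp.1 h1
    linarith
  refine ⟨K, hK0, ?_, heq⟩
  rcases le_total s (N - s) with hmin | hmin
  · rw [min_eq_left hmin]
    calc K ≤ (s : ℝ) * α ^ 2 / 8 := hKs
      _ = 1 / 8 * (s : ℝ) * α ^ 2 := by ring
  · rw [min_eq_right hmin]
    calc K ≤ ((N - s : ℕ) : ℝ) * α ^ 2 / 8 := hKns
      _ = 1 / 8 * ((N - s : ℕ) : ℝ) * α ^ 2 := by ring
end
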